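/- arXiv:2411.05740 — 9 statements merged into one kernel-verified Lean document; each statement's English description precedes it below -/
import Mathlib

section
/- (Proposition 1: data-based characterization of the closed-loop dynamics.) Suppose G_x, G_r, G_v ∈ ℝ^{(m+n)×n} satisfy Σ·G_x = [K_x; I_n], Σ·G_r = [K_r; 0_{n×n}], and Σ·G_v = [K_x; 0_{n×n}] (vertical block matrices with top block m×n and bottom block n×n), for some K_x, K_r ∈ ℝ^{m×n}. Let xᵒ(t), r(t), v(t) ∈ ℝⁿ be vectors, set x(t) := xᵒ(t) + v(t) and apply the control input u(t) := K_x·x(t) + K_r·r(t), so that the next noise-free state is xᵒ(t+1) := A₀·xᵒ(t) + B₀·u(t). Then xᵒ(t+1) = (X̄₁ + W̄₀)·G_x·xᵒ(t) + (X̄₁ + W̄₀)·G_r·r(t) + (X̄₁ + W̄₀)·G_v·v(t). -/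
open Matrix

/-! The measured data satisfy `X₁ + A₀ V₀ - V₁ = A₀ X₀ + B₀ U₀ = [B₀ A₀] Φ`, so after projecting onto `Φᵀ`
the noise-corrected data matrix is `X̄₁ + W̄₀ = [B₀ A₀] Σ`. Hence `Σ G = [K; M]` gives
`(X̄₁ + W̄₀) G = B₀ K + A₀ M`, and the three gains reproduce the closed loop
`A₀ xᵒ + B₀ (K_x (xᵒ + v) + K_r r)`. -/

section DataIdentity

variable {R : Type*} [CommRing R] {ι κ τ σ : Type*} [Fintype ι] [Fintype κ]

theorem successor_data_add_noise_eq (A : Matrix ι ι R) (B : Matrix ι κ R) (U : Matrix κ τ R)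
    (X₀o V₀ V₁ : Matrix ι τ R) :
    A * X₀o + B * U + V₁ + (A * V₀ - V₁) = fromCols B A * fromRows U (X₀o + V₀) := by
  rw [fromCols_mul_fromRows, Matrix.mul_add]
  abel

theorem projected_data_add_noise_eq (A : Matrix ι ι R) (B : Matrix ι κ R) (U : Matrix κ τ R)
    (X₀o V₀ V₁ : Matrix ι τ R) [Fintype τ] (Ψ : Matrix τ σ R) (c : R) :
    c • ((A * X₀o + B * U + V₁) * Ψ) + (A * (c • (V₀ * Ψ)) - c • (V₁ * Ψ)) =
      fromCols B A * (c • (fromRows U (X₀o + V₀) * Ψ)) := by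
  rw [Matrix.mul_smul (fromCols B A), ← Matrix.mul_assoc (fromCols B A),
    ← successor_data_add_noise_eq A B U X₀o V₀ V₁]
  simp only [Matrix.mul_smul, Matrix.add_mul, Matrix.sub_mul, Matrix.mul_assoc, smul_add, smul_sub]

end DataIdentity

theorem closed_loop_mulVec {R : Type*} [CommRing R] {ι κ : Type*} [Fintype ι] [Fintype κ]
    [DecidableEq ι] (A : Matrix ι ι R) (B : Matrix ι κ R) (Kx Kr : Matrix κ ι R)
    (xo r v : ι → R) :
    A *ᵥ xo + B *ᵥ (Kx *ᵥ (xo + v) + Kr *ᵥ r) =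
      (B * Kx + A * 1) *ᵥ xo + (B * Kr + A * 0) *ᵥ r + (B * Kx + A * 0) *ᵥ v := by
  simp only [Matrix.mul_one, Matrix.mul_zero, add_zero, Matrix.add_mulVec, Matrix.mulVec_add,
    ← Matrix.mulVec_mulVec]
  abel

theorem stmt_1_general (n m T : ℕ)
    (A₀ : Matrix (Fin n) (Fin n) ℝ) (B₀ : Matrix (Fin n) (Fin m) ℝ)
    (U₀ : Matrix (Fin m) (Fin T) ℝ) (X₀o V₀ V₁ : Matrix (Fin n) (Fin T) ℝ)
    (Kx Kr : Matrix (Fin m) (Fin n) ℝ)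
    (Gx Gr Gv : Matrix (Fin m ⊕ Fin n) (Fin n) ℝ)
    (X₀ : Matrix (Fin n) (Fin T) ℝ) (hX₀ : X₀ = X₀o + V₀)
    (X₁ : Matrix (Fin n) (Fin T) ℝ) (hX₁ : X₁ = A₀ * X₀o + B₀ * U₀ + V₁)
    (Φ : Matrix (Fin m ⊕ Fin n) (Fin T) ℝ) (hΦ : Φ = fromRows U₀ X₀)
    (Sig : Matrix (Fin m ⊕ Fin n) (Fin m ⊕ Fin n) ℝ) (hSig : Sig = (T : ℝ)⁻¹ • (Φ * Φᵀ))
    (X₁bar : Matrix (Fin n) (Fin m ⊕ Fin n) ℝ) (hX₁bar : X₁bar = (T : ℝ)⁻¹ • (X₁ * Φᵀ))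
    (V₀bar : Matrix (Fin n) (Fin m ⊕ Fin n) ℝ) (hV₀bar : V₀bar = (T : ℝ)⁻¹ • (V₀ * Φᵀ))
    (V₁bar : Matrix (Fin n) (Fin m ⊕ Fin n) ℝ) (hV₁bar : V₁bar = (T : ℝ)⁻¹ • (V₁ * Φᵀ))
    (W₀bar : Matrix (Fin n) (Fin m ⊕ Fin n) ℝ) (hW₀bar : W₀bar = A₀ * V₀bar - V₁bar)
    (hGx : Sig * Gx = fromRows Kx (1 : Matrix (Fin n) (Fin n) ℝ))
    (hGr : Sig * Gr = fromRows Kr (0 : Matrix (Fin n) (Fin n) ℝ))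
    (hGv : Sig * Gv = fromRows Kx (0 : Matrix (Fin n) (Fin n) ℝ))
    -- current state, reference and noise vectors
    (xo r v : Fin n → ℝ)
    -- measured state, control input and next noise-free state
    (x : Fin n → ℝ) (hx : x = xo + v)
    (u : Fin m → ℝ) (hu : u = Kx.mulVec x + Kr.mulVec r)
    (xnext : Fin n → ℝ) (hxnext : xnext = A₀.mulVec xo + B₀.mulVec u) :
    xnext = ((X₁bar + W₀bar) * Gx).mulVec xo + ((X₁bar + W₀bar) * Gr).mulVec r
      + ((X₁bar + W₀bar) * Gv).mulVec v := by
  have hdata : X₁bar + W₀bar = fromCols B₀ A₀ * Sig := by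
    subst hW₀bar hX₁bar hV₀bar hV₁bar hSig hX₁ hΦ hX₀
    exact projected_data_add_noise_eq A₀ B₀ U₀ X₀o V₀ V₁ _ _
  have hgain : ∀ (G : Matrix (Fin m ⊕ Fin n) (Fin n) ℝ) (K : Matrix (Fin m) (Fin n) ℝ)
      (M : Matrix (Fin n) (Fin n) ℝ), Sig * G = fromRows K M →
      (X₁bar + W₀bar) * G = B₀ * K + A₀ * M := fun G K M hG => by
    rw [hdata, Matrix.mul_assoc, hG, fromCols_mul_fromRows]
  rw [hgain Gx Kx 1 hGx, hgain Gr Kr 0 hGr, hgain Gv Kx 0 hGv, hxnext, hu, hx]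
  exact closed_loop_mulVec A₀ B₀ Kx Kr xo r v

/-- Proposition 1: data-based characterization of the closed-loop dynamics. -/
theorem stmt_1 (n m T : ℕ) (hT : 1 ≤ T)
    (A₀ : Matrix (Fin n) (Fin n) ℝ) (B₀ : Matrix (Fin n) (Fin m) ℝ)
    (U₀ : Matrix (Fin m) (Fin T) ℝ) (X₀o V₀ V₁ : Matrix (Fin n) (Fin T) ℝ)
    (Kx Kr : Matrix (Fin m) (Fin n) ℝ)
    (Gx Gr Gv : Matrix (Fin m ⊕ Fin n) (Fin n) ℝ)
    (X₀ : Matrix (Fin n) (Fin T) ℝ) (hX₀ : X₀ = X₀o + V₀)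
    (X₁ : Matrix (Fin n) (Fin T) ℝ) (hX₁ : X₁ = A₀ * X₀o + B₀ * U₀ + V₁)
    (Φ : Matrix (Fin m ⊕ Fin n) (Fin T) ℝ) (hΦ : Φ = fromRows U₀ X₀)
    (Sig : Matrix (Fin m ⊕ Fin n) (Fin m ⊕ Fin n) ℝ) (hSig : Sig = (T : ℝ)⁻¹ • (Φ * Φᵀ))
    (X₁bar : Matrix (Fin n) (Fin m ⊕ Fin n) ℝ) (hX₁bar : X₁bar = (T : ℝ)⁻¹ • (X₁ * Φᵀ))
    (V₀bar : Matrix (Fin n) (Fin m ⊕ Fin n) ℝ) (hV₀bar : V₀bar = (T : ℝ)⁻¹ • (V₀ * Φᵀ))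
    (V₁bar : Matrix (Fin n) (Fin m ⊕ Fin n) ℝ) (hV₁bar : V₁bar = (T : ℝ)⁻¹ • (V₁ * Φᵀ))
    (W₀bar : Matrix (Fin n) (Fin m ⊕ Fin n) ℝ) (hW₀bar : W₀bar = A₀ * V₀bar - V₁bar)
    (hGx : Sig * Gx = fromRows Kx (1 : Matrix (Fin n) (Fin n) ℝ))
    (hGr : Sig * Gr = fromRows Kr (0 : Matrix (Fin n) (Fin n) ℝ))
    (hGv : Sig * Gv = fromRows Kx (0 : Matrix (Fin n) (Fin n) ℝ))
    -- current state, reference and noise vectors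
    (xo r v : Fin n → ℝ)
    -- measured state, control input and next noise-free state
    (x : Fin n → ℝ) (hx : x = xo + v)
    (u : Fin m → ℝ) (hu : u = Kx.mulVec x + Kr.mulVec r)
    (xnext : Fin n → ℝ) (hxnext : xnext = A₀.mulVec xo + B₀.mulVec u) :
    xnext = ((X₁bar + W₀bar) * Gx).mulVec xo + ((X₁bar + W₀bar) * Gr).mulVec r
      + ((X₁bar + W₀bar) * Gv).mulVec v :=
  stmt_1_general n m T A₀ B₀ U₀ X₀o V₀ V₁ Kx Kr Gx Gr Gv X₀ hX₀ X₁ hX₁ Φ hΦ Sig hSig X₁bar hX₁bar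
    V₀bar hV₀bar V₁bar hV₁bar W₀bar hW₀bar hGx hGr hGv xo r v x hx u hu xnext hxnext
end

section
/- (Theorem 1, sufficiency.) Suppose G_x, G_r ∈ ℝ^{(m+n)×n} satisfy the data-driven matching conditions X̄₁ᵒ·G_x = A_M, X̄₁ᵒ·G_r = B_M, X̄₀ᵒ·G_x = I_n, and X̄₀ᵒ·G_r = 0_{n×n}. Then the controller gain matrices K_x := Ū₀·G_x ∈ ℝ^{m×n} and K_r := Ū₀·G_r ∈ ℝ^{m×n} solve the model-reference matching problem: A₀ + B₀·K_x = A_M and B₀·K_r = B_M. -/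
open Matrix

/-! Projecting the data onto `Φᵒᵀ` is a right multiplication, so the projected data obey the
plant equation `X̄₁ᵒ = A₀ X̄₀ᵒ + B₀ Ū₀` exactly like the raw data. Multiplying it by `G_x` and
`G_r` and inserting `X̄₀ᵒ G_x = I`, `X̄₀ᵒ G_r = 0` turns the data-driven matching conditions into
the model-reference ones. -/

namespace Matrix

variable {R : Type*} [CommSemiring R] {n m τ κ ι : Type*}
  [Fintype n] [Fintype m] [Fintype τ]

theorem smul_mul_plant_eq (A : Matrix n n R) (B : Matrix n m R) (X₀ : Matrix n τ R)
    (U : Matrix m τ R) (Ψ : Matrix τ κ R) (c : R) :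
    c • ((A * X₀ + B * U) * Ψ) = A * (c • (X₀ * Ψ)) + B * (c • (U * Ψ)) := by
  rw [Matrix.add_mul, smul_add, Matrix.mul_smul, Matrix.mul_smul, Matrix.mul_assoc,
    Matrix.mul_assoc]

theorem plant_mul_eq {A : Matrix n n R} {B : Matrix n m R} {X₀ X₁ : Matrix n κ R}
    {U : Matrix m κ R} [Fintype κ] (h : X₁ = A * X₀ + B * U) (G : Matrix κ ι R) :
    A * (X₀ * G) + B * (U * G) = X₁ * G := by
  rw [h, Matrix.add_mul, Matrix.mul_assoc, Matrix.mul_assoc]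

end Matrix

theorem stmt_2_general (n m T : ℕ)
    (A₀ : Matrix (Fin n) (Fin n) ℝ) (B₀ : Matrix (Fin n) (Fin m) ℝ)
    (U₀ : Matrix (Fin m) (Fin T) ℝ) (X₀o : Matrix (Fin n) (Fin T) ℝ)
    (A_M B_M : Matrix (Fin n) (Fin n) ℝ)
    (X₁o : Matrix (Fin n) (Fin T) ℝ) (hX₁o : X₁o = A₀ * X₀o + B₀ * U₀)
    (Φo : Matrix (Fin m ⊕ Fin n) (Fin T) ℝ)
    (U₀bar : Matrix (Fin m) (Fin m ⊕ Fin n) ℝ) (hU₀bar : U₀bar = (T : ℝ)⁻¹ • (U₀ * Φoᵀ))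
    (X₀obar : Matrix (Fin n) (Fin m ⊕ Fin n) ℝ) (hX₀obar : X₀obar = (T : ℝ)⁻¹ • (X₀o * Φoᵀ))
    (X₁obar : Matrix (Fin n) (Fin m ⊕ Fin n) ℝ) (hX₁obar : X₁obar = (T : ℝ)⁻¹ • (X₁o * Φoᵀ))
    (Gx Gr : Matrix (Fin m ⊕ Fin n) (Fin n) ℝ)
    (h1 : X₁obar * Gx = A_M) (h2 : X₁obar * Gr = B_M)
    (h3 : X₀obar * Gx = (1 : Matrix (Fin n) (Fin n) ℝ))
    (h4 : X₀obar * Gr = (0 : Matrix (Fin n) (Fin n) ℝ)) :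
    A₀ + B₀ * (U₀bar * Gx) = A_M ∧ B₀ * (U₀bar * Gr) = B_M := by
  have projected_plant : X₁obar = A₀ * X₀obar + B₀ * U₀bar := by
    rw [hX₁obar, hX₁o, hX₀obar, hU₀bar, smul_mul_plant_eq]
  constructor
  · simpa only [h3, h1, mul_one] using plant_mul_eq projected_plant Gx
  · simpa only [h4, h2, mul_zero, zero_add] using plant_mul_eq projected_plant Gr

/-- Theorem 1 (sufficiency): if `Gx, Gr` satisfy the data-driven matching conditions,
then the controller gains `Kx = Ū₀ Gx`, `Kr = Ū₀ Gr` solve the matching problem. -/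
theorem stmt_2 (n m T : ℕ) (hT : 1 ≤ T)
    (A₀ : Matrix (Fin n) (Fin n) ℝ) (B₀ : Matrix (Fin n) (Fin m) ℝ)
    (U₀ : Matrix (Fin m) (Fin T) ℝ) (X₀o : Matrix (Fin n) (Fin T) ℝ)
    (A_M B_M : Matrix (Fin n) (Fin n) ℝ)
    (X₁o : Matrix (Fin n) (Fin T) ℝ) (hX₁o : X₁o = A₀ * X₀o + B₀ * U₀)
    (Φo : Matrix (Fin m ⊕ Fin n) (Fin T) ℝ) (hΦo : Φo = fromRows U₀ X₀o)
    (U₀bar : Matrix (Fin m) (Fin m ⊕ Fin n) ℝ) (hU₀bar : U₀bar = (T : ℝ)⁻¹ • (U₀ * Φoᵀ))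
    (X₀obar : Matrix (Fin n) (Fin m ⊕ Fin n) ℝ) (hX₀obar : X₀obar = (T : ℝ)⁻¹ • (X₀o * Φoᵀ))
    (X₁obar : Matrix (Fin n) (Fin m ⊕ Fin n) ℝ) (hX₁obar : X₁obar = (T : ℝ)⁻¹ • (X₁o * Φoᵀ))
    (Gx Gr : Matrix (Fin m ⊕ Fin n) (Fin n) ℝ)
    (h1 : X₁obar * Gx = A_M) (h2 : X₁obar * Gr = B_M)
    (h3 : X₀obar * Gx = (1 : Matrix (Fin n) (Fin n) ℝ))
    (h4 : X₀obar * Gr = (0 : Matrix (Fin n) (Fin n) ℝ)) :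
    A₀ + B₀ * (U₀bar * Gx) = A_M ∧ B₀ * (U₀bar * Gr) = B_M :=
  stmt_2_general n m T A₀ B₀ U₀ X₀o A_M B_M X₁o hX₁o Φo U₀bar hU₀bar X₀obar hX₀obar X₁obar hX₁obar
    Gx Gr h1 h2 h3 h4
end

section
/- (Theorem 1, necessity.) Suppose the sample covariance Σᵒ := (1/T)·Φᵒ·(Φᵒ)ᵀ is invertible, and suppose the model-reference matching problem is feasible, i.e., there exist K_x, K_r ∈ ℝ^{m×n} with A₀ + B₀·K_x = A_M and B₀·K_r = B_M. Then there exist G_x, G_r ∈ ℝ^{(m+n)×n} satisfying the data-driven matching conditions X̄₁ᵒ·G_x = A_M, X̄₁ᵒ·G_r = B_M, X̄₀ᵒ·G_x = I_n, X̄₀ᵒ·G_r = 0_{n×n}, and moreover Ū₀·G_x = K_x and Ū₀·G_r = K_r. -/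
/-!
With `Φ = [U₀; X₀]`, the scaled sample covariance `(1/T) Φ Φᵀ` is exactly the stacked matrix
`[Ū₀; X̄₀]`, so its inverse lets us prescribe `Ū₀ G` and `X̄₀ G` at will:
`G = Σ⁻¹ [K; M]` gives `Ū₀ G = K` and `X̄₀ G = M`. Projecting `X₁ = A₀ X₀ + B₀ U₀` gives
`X̄₁ = A₀ X̄₀ + B₀ Ū₀`, so the choices `[Kx; 1]` and `[Kr; 0]` turn the model-reference matching
equations into the data-driven ones.
-/

open Matrix

namespace Matrix

variable {R α m₁ m₂ κ : Type*}

lemma smul_fromRows [SMul R α] (c : R) (A₁ : Matrix m₁ κ α) (A₂ : Matrix m₂ κ α) :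
    c • fromRows A₁ A₂ = fromRows (c • A₁) (c • A₂) := by
  ext (i | i) j <;> rfl

variable [CommRing R] [Fintype m₁] [Fintype m₂] [DecidableEq m₁] [DecidableEq m₂]

lemma mul_nonsing_inv_mul_fromRows_of_isUnit {P : Matrix m₁ (m₁ ⊕ m₂) R}
    {Q : Matrix m₂ (m₁ ⊕ m₂) R} (h : IsUnit (fromRows P Q)) (K : Matrix m₁ κ R)
    (M : Matrix m₂ κ R) :
    P * ((fromRows P Q)⁻¹ * fromRows K M) = K ∧ Q * ((fromRows P Q)⁻¹ * fromRows K M) = M := by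
  rw [← fromRows_inj.eq_iff, ← fromRows_mul]
  exact mul_nonsing_inv_cancel_left _ _ ((isUnit_iff_isUnit_det _).mp h)

end Matrix

theorem stmt_3_general (n m T : ℕ)
    (A₀ : Matrix (Fin n) (Fin n) ℝ) (B₀ : Matrix (Fin n) (Fin m) ℝ)
    (U₀ : Matrix (Fin m) (Fin T) ℝ) (X₀o : Matrix (Fin n) (Fin T) ℝ)
    (A_M B_M : Matrix (Fin n) (Fin n) ℝ)
    (X₁o : Matrix (Fin n) (Fin T) ℝ) (hX₁o : X₁o = A₀ * X₀o + B₀ * U₀)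
    (Φo : Matrix (Fin m ⊕ Fin n) (Fin T) ℝ) (hΦo : Φo = fromRows U₀ X₀o)
    (Sigo : Matrix (Fin m ⊕ Fin n) (Fin m ⊕ Fin n) ℝ) (hSigo : Sigo = (T : ℝ)⁻¹ • (Φo * Φoᵀ))
    (hinv : IsUnit Sigo)
    (U₀bar : Matrix (Fin m) (Fin m ⊕ Fin n) ℝ) (hU₀bar : U₀bar = (T : ℝ)⁻¹ • (U₀ * Φoᵀ))
    (X₀obar : Matrix (Fin n) (Fin m ⊕ Fin n) ℝ) (hX₀obar : X₀obar = (T : ℝ)⁻¹ • (X₀o * Φoᵀ))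
    (X₁obar : Matrix (Fin n) (Fin m ⊕ Fin n) ℝ) (hX₁obar : X₁obar = (T : ℝ)⁻¹ • (X₁o * Φoᵀ))
    (Kx Kr : Matrix (Fin m) (Fin n) ℝ)
    (hmatchA : A₀ + B₀ * Kx = A_M) (hmatchB : B₀ * Kr = B_M) :
    ∃ Gx Gr : Matrix (Fin m ⊕ Fin n) (Fin n) ℝ,
      X₁obar * Gx = A_M ∧ X₁obar * Gr = B_M ∧
      X₀obar * Gx = (1 : Matrix (Fin n) (Fin n) ℝ) ∧
      X₀obar * Gr = (0 : Matrix (Fin n) (Fin n) ℝ) ∧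
      U₀bar * Gx = Kx ∧ U₀bar * Gr = Kr := by
  have hSig : Sigo = fromRows U₀bar X₀obar := by
    rw [hSigo, hΦo, fromRows_mul, smul_fromRows, ← hΦo, hU₀bar, hX₀obar]
  have hX₁bar (G : Matrix (Fin m ⊕ Fin n) (Fin n) ℝ) :
      X₁obar * G = A₀ * (X₀obar * G) + B₀ * (U₀bar * G) := by
    rw [hX₁obar, hX₀obar, hU₀bar, hX₁o]
    simp only [Matrix.add_mul, smul_add, Matrix.smul_mul, Matrix.mul_smul, Matrix.mul_assoc]
  rw [hSig] at hinv
  obtain ⟨hUx, hXx⟩ := mul_nonsing_inv_mul_fromRows_of_isUnit hinv Kx 1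
  obtain ⟨hUr, hXr⟩ := mul_nonsing_inv_mul_fromRows_of_isUnit hinv Kr 0
  refine ⟨_, _, ?_, ?_, hXx, hXr, hUx, hUr⟩
  · rw [hX₁bar, hXx, hUx, Matrix.mul_one, hmatchA]
  · rw [hX₁bar, hXr, hUr, Matrix.mul_zero, zero_add, hmatchB]

/-- Theorem 1 (necessity): if the sample covariance is invertible and the matching problem
is feasible, then the data-driven matching conditions admit a solution reproducing the gains. -/
theorem stmt_3 (n m T : ℕ) (hT : 1 ≤ T)
    (A₀ : Matrix (Fin n) (Fin n) ℝ) (B₀ : Matrix (Fin n) (Fin m) ℝ)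
    (U₀ : Matrix (Fin m) (Fin T) ℝ) (X₀o : Matrix (Fin n) (Fin T) ℝ)
    (A_M B_M : Matrix (Fin n) (Fin n) ℝ)
    (X₁o : Matrix (Fin n) (Fin T) ℝ) (hX₁o : X₁o = A₀ * X₀o + B₀ * U₀)
    (Φo : Matrix (Fin m ⊕ Fin n) (Fin T) ℝ) (hΦo : Φo = fromRows U₀ X₀o)
    (Sigo : Matrix (Fin m ⊕ Fin n) (Fin m ⊕ Fin n) ℝ) (hSigo : Sigo = (T : ℝ)⁻¹ • (Φo * Φoᵀ))
    (hinv : IsUnit Sigo)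
    (U₀bar : Matrix (Fin m) (Fin m ⊕ Fin n) ℝ) (hU₀bar : U₀bar = (T : ℝ)⁻¹ • (U₀ * Φoᵀ))
    (X₀obar : Matrix (Fin n) (Fin m ⊕ Fin n) ℝ) (hX₀obar : X₀obar = (T : ℝ)⁻¹ • (X₀o * Φoᵀ))
    (X₁obar : Matrix (Fin n) (Fin m ⊕ Fin n) ℝ) (hX₁obar : X₁obar = (T : ℝ)⁻¹ • (X₁o * Φoᵀ))
    (Kx Kr : Matrix (Fin m) (Fin n) ℝ)
    (hmatchA : A₀ + B₀ * Kx = A_M) (hmatchB : B₀ * Kr = B_M) :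
    ∃ Gx Gr : Matrix (Fin m ⊕ Fin n) (Fin n) ℝ,
      X₁obar * Gx = A_M ∧ X₁obar * Gr = B_M ∧
      X₀obar * Gx = (1 : Matrix (Fin n) (Fin n) ℝ) ∧
      X₀obar * Gr = (0 : Matrix (Fin n) (Fin n) ℝ) ∧
      U₀bar * Gx = Kx ∧ U₀bar * Gr = Kr :=
  stmt_3_general n m T A₀ B₀ U₀ X₀o A_M B_M X₁o hX₁o Φo hΦo Sigo hSigo hinv U₀bar hU₀bar X₀obar
    hX₀obar X₁obar hX₁obar Kx Kr hmatchA hmatchB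
end

section
/- (Proposition 2, part (i): stability of the controller obtained from a feasible SDP solution.) Suppose Q_x ∈ ℝ^{(m+n)×n} and P ∈ ℝ^{n×n} satisfy the consistency constraint X̄₀ᵒ·Q_x = P and the LMI that the 2n×2n block matrix [[P, X̄₁ᵒ·Q_x], [(X̄₁ᵒ·Q_x)ᵀ, P]] is positive definite. Then P is positive definite, the controller gain K_x := Ū₀·Q_x·P⁻¹ yields a closed-loop matrix A_cl := A₀ + B₀·K_x satisfying the Lyapunov inequality that P − A_cl·P·A_clᵀ is positive definite, and consequently the closed loop is stable: A_clᵏ converges to the zero matrix as k → ∞. -/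
/-!
Since `X₁ᵒ = A₀X₀ᵒ + B₀U₀`, linearity gives `X̄₁ᵒQx = A₀X̄₀ᵒQx + B₀Ū₀Qx = (A₀ + B₀Kx)P`, so the LMI
says that `[[P, A_cl P], [(A_cl P)ᵀ, P]]` is positive definite. Its diagonal block `P` is then
positive definite, and its Schur complement `P - A_cl P A_clᵀ` is the Lyapunov inequality.
For stability, write `Q := P - A P Aᵀ ≥ r • 1` with `r > 0`. Summing `A^k Q (A^k)ᵀ` over `k < N`
telescopes to `P - A^N P (A^N)ᵀ ≤ P`, so on the diagonal `r ∑ₖ ∑ⱼ |(A^k)ᵢⱼ|² ≤ Pᵢᵢ`: the entries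
of `A^k` are square-summable and hence tend to `0`.
-/

open Matrix Filter Finset
open scoped ComplexOrder Topology

section

variable {𝕜 n : Type*} [RCLike 𝕜] [Fintype n] [DecidableEq n]

theorem Matrix.PosDef.schur_complement₂₂ {l : Type*} [Fintype l] [DecidableEq l]
    {A : Matrix l l 𝕜} {B : Matrix l n 𝕜} {D : Matrix n n 𝕜}
    (h : (fromBlocks A B Bᴴ D).PosDef) : (A - B * D⁻¹ * Bᴴ).PosDef := by
  have hD : D.PosDef := h.submatrix Sum.inr_injective
  have := hD.isUnit.invertible
  set L : Matrix (l ⊕ n) (l ⊕ n) 𝕜 := fromBlocks 1 (B * ⅟D) 0 1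
  have hL : IsUnit L := by simp [L, isUnit_iff_isUnit_det]
  have hLstar : fromBlocks 1 0 (⅟D * Bᴴ) 1 = star L := by
    simp [L, star_eq_conjTranspose, fromBlocks_conjTranspose, conjTranspose_nonsing_inv, hD.1.eq]
  rw [fromBlocks_eq_of_invertible₂₂, hLstar, hL.posDef_star_right_conjugate_iff,
    invOf_eq_nonsing_inv] at h
  exact h.submatrix Sum.inl_injective

theorem Matrix.PosDef.sub_mul_mul_conjTranspose_of_fromBlocks {A P : Matrix n n 𝕜}
    (h : (fromBlocks P (A * P) (A * P)ᴴ P).PosDef) : (P - A * P * Aᴴ).PosDef := by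
  have hP : P.PosDef := h.submatrix Sum.inr_injective
  have hPdet : IsUnit P.det := (isUnit_iff_isUnit_det P).mp hP.isUnit
  simpa [conjTranspose_mul, hP.1.eq, Matrix.mul_assoc, nonsing_inv_mul_cancel_left _ _ hPdet]
    using h.schur_complement₂₂

open scoped MatrixOrder in
theorem Matrix.PosDef.exists_pos_smul_one_le {Q : Matrix n n 𝕜} (hQ : Q.PosDef) :
    ∃ r : ℝ, 0 < r ∧ (Q - r • 1).PosSemidef := by
  cases isEmpty_or_nonempty n
  · exact ⟨1, one_pos, Subsingleton.elim 0 (Q - _) ▸ .zero⟩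
  obtain ⟨r, hr, hle⟩ := (CFC.exists_pos_algebraMap_le_iff hQ.1.isSelfAdjoint).mpr fun x hx => by
    obtain ⟨i, rfl⟩ := hQ.1.spectrum_real_eq_range_eigenvalues ▸ hx
    exact hQ.eigenvalues_pos i
  exact ⟨r, hr, by simpa [Matrix.le_iff, Algebra.algebraMap_eq_smul_one] using hle⟩

theorem Matrix.PosSemidef.sub_sum_pow_mul_mul_pow_conjTranspose {A P R : Matrix n n 𝕜}
    (hP : P.PosSemidef) (h : (P - A * P * Aᴴ - R).PosSemidef) (N : ℕ) :
    (P - ∑ k ∈ range N, A ^ k * R * (A ^ k)ᴴ).PosSemidef := by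
  have key : ∀ N : ℕ,
      (P - ∑ k ∈ range N, A ^ k * R * (A ^ k)ᴴ - A ^ N * P * (A ^ N)ᴴ).PosSemidef := by
    intro N
    induction N with
    | zero => simpa using PosSemidef.zero
    | succ N ih =>
      convert ih.add (h.mul_mul_conjTranspose_same (A ^ N)) using 1
      simp only [sum_range_succ, pow_succ, conjTranspose_mul, Matrix.mul_sub, Matrix.sub_mul,
        Matrix.mul_assoc]
      abel
  simpa using (key N).add (hP.mul_mul_conjTranspose_same (A ^ N))

omit [DecidableEq n] in
theorem Matrix.tendsto_zero_of_sum_range_sum_norm_sq_le {M : ℕ → Matrix n n 𝕜} {c : n → ℝ}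
    (h : ∀ N i, ∑ k ∈ range N, ∑ j, ‖M k i j‖ ^ 2 ≤ c i) : Tendsto M atTop (𝓝 0) := by
  refine tendsto_pi_nhds.mpr fun i => tendsto_pi_nhds.mpr fun j => ?_
  have hsum := summable_of_sum_range_le (fun k => by positivity) (h · i)
  refine squeeze_zero_norm (fun k => ?_) (by simpa using hsum.tendsto_atTop_zero.sqrt)
  exact Real.le_sqrt_of_sq_le (single_le_sum (f := fun j => ‖M k i j‖ ^ 2)
    (fun _ _ => by positivity) (mem_univ j))

theorem Matrix.tendsto_pow_atTop_nhds_zero_of_posDef_sub {A P : Matrix n n 𝕜}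
    (hP : P.PosSemidef) (hQ : (P - A * P * Aᴴ).PosDef) : Tendsto (A ^ ·) atTop (𝓝 0) := by
  obtain ⟨r, hr, hR⟩ := hQ.exists_pos_smul_one_le
  refine tendsto_zero_of_sum_range_sum_norm_sq_le (c := fun i => RCLike.re (P i i) / r)
    fun N i => (le_div_iff₀' hr).mpr ?_
  have hdiag := (hP.sub_sum_pow_mul_mul_pow_conjTranspose hR N).diag_nonneg (i := i)
  simpa [-conjTranspose_pow, mul_sum, Matrix.sum_apply, Matrix.mul_apply, RCLike.mul_conj,
    RCLike.smul_re, map_sum, RCLike.re_ofReal_pow] using (RCLike.nonneg_iff.mp hdiag).1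

end

theorem stmt_5_general (n m T : ℕ)
    (A₀ : Matrix (Fin n) (Fin n) ℝ) (B₀ : Matrix (Fin n) (Fin m) ℝ)
    (U₀ : Matrix (Fin m) (Fin T) ℝ) (X₀o : Matrix (Fin n) (Fin T) ℝ)
    (X₁o : Matrix (Fin n) (Fin T) ℝ) (hX₁o : X₁o = A₀ * X₀o + B₀ * U₀)
    (Φo : Matrix (Fin m ⊕ Fin n) (Fin T) ℝ)
    (U₀bar : Matrix (Fin m) (Fin m ⊕ Fin n) ℝ) (hU₀bar : U₀bar = (T : ℝ)⁻¹ • (U₀ * Φoᵀ))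
    (X₀obar : Matrix (Fin n) (Fin m ⊕ Fin n) ℝ) (hX₀obar : X₀obar = (T : ℝ)⁻¹ • (X₀o * Φoᵀ))
    (X₁obar : Matrix (Fin n) (Fin m ⊕ Fin n) ℝ) (hX₁obar : X₁obar = (T : ℝ)⁻¹ • (X₁o * Φoᵀ))
    (Qx : Matrix (Fin m ⊕ Fin n) (Fin n) ℝ) (P : Matrix (Fin n) (Fin n) ℝ)
    (hcons : X₀obar * Qx = P)
    (hLMI : (fromBlocks P (X₁obar * Qx) (X₁obar * Qx)ᵀ P).PosDef)
    (Kx : Matrix (Fin m) (Fin n) ℝ) (hKx : Kx = U₀bar * Qx * P⁻¹)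
    (Acl : Matrix (Fin n) (Fin n) ℝ) (hAcl : Acl = A₀ + B₀ * Kx) :
    P.PosDef ∧ (P - Acl * P * Aclᵀ).PosDef ∧
      Tendsto (fun k : ℕ => Acl ^ k) atTop (nhds 0) := by
  have hP : P.PosDef := hLMI.submatrix Sum.inl_injective
  have hPdet : IsUnit P.det := (isUnit_iff_isUnit_det P).mp hP.isUnit
  have hclosed : X₁obar * Qx = Acl * P := by
    rw [hAcl, hKx, Matrix.add_mul, Matrix.mul_assoc B₀, nonsing_inv_mul_cancel_right _ _ hPdet,
      ← hcons, hX₁obar, hX₁o, hX₀obar, hU₀bar]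
    simp only [Matrix.add_mul, Matrix.smul_mul, Matrix.mul_smul, smul_add, Matrix.mul_assoc]
  rw [hclosed, ← conjTranspose_eq_transpose_of_trivial] at hLMI
  have hLyap := hLMI.sub_mul_mul_conjTranspose_of_fromBlocks
  rw [conjTranspose_eq_transpose_of_trivial] at hLyap
  exact ⟨hP, hLyap, tendsto_pow_atTop_nhds_zero_of_posDef_sub hP.posSemidef (by simpa using hLyap)⟩

/-- Proposition 2, part (i): stability of the controller obtained from a feasible SDP solution. -/
theorem stmt_5 (n m T : ℕ) (hT : 1 ≤ T)
    (A₀ : Matrix (Fin n) (Fin n) ℝ) (B₀ : Matrix (Fin n) (Fin m) ℝ)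
    (U₀ : Matrix (Fin m) (Fin T) ℝ) (X₀o : Matrix (Fin n) (Fin T) ℝ)
    (X₁o : Matrix (Fin n) (Fin T) ℝ) (hX₁o : X₁o = A₀ * X₀o + B₀ * U₀)
    (Φo : Matrix (Fin m ⊕ Fin n) (Fin T) ℝ) (hΦo : Φo = fromRows U₀ X₀o)
    (U₀bar : Matrix (Fin m) (Fin m ⊕ Fin n) ℝ) (hU₀bar : U₀bar = (T : ℝ)⁻¹ • (U₀ * Φoᵀ))
    (X₀obar : Matrix (Fin n) (Fin m ⊕ Fin n) ℝ) (hX₀obar : X₀obar = (T : ℝ)⁻¹ • (X₀o * Φoᵀ))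
    (X₁obar : Matrix (Fin n) (Fin m ⊕ Fin n) ℝ) (hX₁obar : X₁obar = (T : ℝ)⁻¹ • (X₁o * Φoᵀ))
    (Qx : Matrix (Fin m ⊕ Fin n) (Fin n) ℝ) (P : Matrix (Fin n) (Fin n) ℝ)
    (hcons : X₀obar * Qx = P)
    (hLMI : (fromBlocks P (X₁obar * Qx) (X₁obar * Qx)ᵀ P).PosDef)
    (Kx : Matrix (Fin m) (Fin n) ℝ) (hKx : Kx = U₀bar * Qx * P⁻¹)
    (Acl : Matrix (Fin n) (Fin n) ℝ) (hAcl : Acl = A₀ + B₀ * Kx) :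
    P.PosDef ∧ (P - Acl * P * Aclᵀ).PosDef ∧
      Tendsto (fun k : ℕ => Acl ^ k) atTop (nhds 0) :=
  stmt_5_general n m T A₀ B₀ U₀ X₀o X₁o hX₁o Φo U₀bar hU₀bar X₀obar hX₀obar X₁obar hX₁obar Qx P
    hcons hLMI Kx hKx Acl hAcl
end

section
/- (Proposition 2, part (i): feasibility of the SDP under stabilizability.) Suppose the sample covariance Σᵒ := (1/T)·Φᵒ·(Φᵒ)ᵀ is invertible, and suppose there exists a stabilizing linear static state-feedback gain, i.e., there exist K ∈ ℝ^{m×n} and a positive definite P₀ ∈ ℝ^{n×n} such that P₀ − (A₀ + B₀K)·P₀·(A₀ + B₀K)ᵀ is positive definite. Then there exist Q_x, Q_r ∈ ℝ^{(m+n)×n} and a positive definite P ∈ ℝ^{n×n} such that X̄₀ᵒ·Q_x = P, X̄₀ᵒ·Q_r = 0_{n×n}, and the 2n×2n block matrix [[P, X̄₁ᵒ·Q_x], [(X̄₁ᵒ·Q_x)ᵀ, P]] is positive definite. -/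
/-!
Invertibility of the sample covariance `Σᵒ = [Ū₀; X̄₀ᵒ]` lets one choose `Q_x` with
`Ū₀ Q_x = K P₀` and `X̄₀ᵒ Q_x = P₀`. Since `X̄₁ᵒ = A₀ X̄₀ᵒ + B₀ Ū₀`, this gives
`X̄₁ᵒ Q_x = (A₀ + B₀ K) P₀`, and with `P = P₀`, `Q_r = 0` the block inequality is, by a
Schur complement, exactly the Lyapunov inequality `P₀ - (A₀ + B₀ K) P₀ (A₀ + B₀ K)ᵀ ≻ 0`.
-/

open Matrix

namespace Matrix

variable {m n : Type*} [Fintype m] [Fintype n]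

theorem PosDef.fromBlocks₂₂_of_schur {R : Type*} [CommRing R] [PartialOrder R] [StarRing R]
    [StarOrderedRing R] [DecidableEq n] {A : Matrix m m R} {B : Matrix m n R}
    {D : Matrix n n R} (hD : D.PosDef) [Invertible D] (hS : (A - B * D⁻¹ * Bᴴ).PosDef) :
    (fromBlocks A B Bᴴ D).PosDef := by
  refine .of_dotProduct_mulVec_pos ((IsHermitian.fromBlocks₂₂ A B hD.1).2 hS.1) fun z hz => ?_
  obtain ⟨x, y, rfl⟩ : ∃ x y, z = x ⊕ᵥ y := ⟨_, _, (Sum.elim_comp_inl_inr z).symm⟩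
  rw [dotProduct_mulVec, schur_complement_eq₂₂ A B x y hD.1, ← dotProduct_mulVec,
    ← dotProduct_mulVec]
  rcases eq_or_ne x 0 with rfl | hx
  · have hy : y ≠ 0 := by rintro rfl; exact hz Sum.elim_zero_zero
    simpa using hD.dotProduct_mulVec_pos hy
  · exact add_pos_of_nonneg_of_pos (hD.posSemidef.dotProduct_mulVec_nonneg _)
      (hS.dotProduct_mulVec_pos hx)

theorem posDef_fromBlocks_mul_of_posDef_sub_mul_mul_transpose [DecidableEq n]
    {P M : Matrix n n ℝ} (hP : P.PosDef) (h : (P - M * P * Mᵀ).PosDef) :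
    (fromBlocks P (M * P) (M * P)ᵀ P).PosDef := by
  have : Invertible P := hP.isUnit.invertible
  have hPt : Pᵀ = P := hP.1
  rw [← conjTranspose_eq_transpose_of_trivial]
  refine hP.fromBlocks₂₂_of_schur ?_
  rwa [conjTranspose_eq_transpose_of_trivial, transpose_mul, hPt,
    mul_inv_cancel_right_of_invertible, ← Matrix.mul_assoc]

theorem exists_mul_eq_of_isUnit_fromRows {R : Type*} [CommRing R] {m₁ m₂ p : Type*}
    [Fintype m₁] [Fintype m₂] [DecidableEq m₁] [DecidableEq m₂]
    {A₁ : Matrix m₁ (m₁ ⊕ m₂) R} {A₂ : Matrix m₂ (m₁ ⊕ m₂) R} (hA : IsUnit (fromRows A₁ A₂))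
    (R₁ : Matrix m₁ p R) (R₂ : Matrix m₂ p R) :
    ∃ Q : Matrix (m₁ ⊕ m₂) p R, A₁ * Q = R₁ ∧ A₂ * Q = R₂ := by
  refine ⟨(fromRows A₁ A₂)⁻¹ * fromRows R₁ R₂, (fromRows_ext_iff _ _ _ _).1 ?_⟩
  rw [← fromRows_mul, ← Matrix.mul_assoc, mul_nonsing_inv _ ((isUnit_iff_isUnit_det _).1 hA),
    Matrix.one_mul]

end Matrix

theorem stmt_6_general (n m T : ℕ)
    (A₀ : Matrix (Fin n) (Fin n) ℝ) (B₀ : Matrix (Fin n) (Fin m) ℝ)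
    (U₀ : Matrix (Fin m) (Fin T) ℝ) (X₀o : Matrix (Fin n) (Fin T) ℝ)
    (X₁o : Matrix (Fin n) (Fin T) ℝ) (hX₁o : X₁o = A₀ * X₀o + B₀ * U₀)
    (Φo : Matrix (Fin m ⊕ Fin n) (Fin T) ℝ) (hΦo : Φo = fromRows U₀ X₀o)
    (Sigo : Matrix (Fin m ⊕ Fin n) (Fin m ⊕ Fin n) ℝ) (hSigo : Sigo = (T : ℝ)⁻¹ • (Φo * Φoᵀ))
    (hinv : IsUnit Sigo)
    (X₀obar : Matrix (Fin n) (Fin m ⊕ Fin n) ℝ) (hX₀obar : X₀obar = (T : ℝ)⁻¹ • (X₀o * Φoᵀ))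
    (X₁obar : Matrix (Fin n) (Fin m ⊕ Fin n) ℝ) (hX₁obar : X₁obar = (T : ℝ)⁻¹ • (X₁o * Φoᵀ))
    (K : Matrix (Fin m) (Fin n) ℝ) (P₀ : Matrix (Fin n) (Fin n) ℝ) (hP₀ : P₀.PosDef)
    (hstab : (P₀ - (A₀ + B₀ * K) * P₀ * (A₀ + B₀ * K)ᵀ).PosDef) :
    ∃ (Qx Qr : Matrix (Fin m ⊕ Fin n) (Fin n) ℝ) (P : Matrix (Fin n) (Fin n) ℝ),
      P.PosDef ∧ X₀obar * Qx = P ∧ X₀obar * Qr = (0 : Matrix (Fin n) (Fin n) ℝ) ∧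
      (fromBlocks P (X₁obar * Qx) (X₁obar * Qx)ᵀ P).PosDef := by
  subst hX₁o hΦo hSigo hX₀obar hX₁obar
  set Φ := fromRows U₀ X₀o
  set U₀bar : Matrix (Fin m) (Fin m ⊕ Fin n) ℝ := (T : ℝ)⁻¹ • (U₀ * Φᵀ)
  set X₀bar : Matrix (Fin n) (Fin m ⊕ Fin n) ℝ := (T : ℝ)⁻¹ • (X₀o * Φᵀ)
  have hSig : (T : ℝ)⁻¹ • (Φ * Φᵀ) = fromRows U₀bar X₀bar := by
    rw [fromRows_mul]
    ext (i | i) j <;> rfl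
  obtain ⟨Q, hUQ, hXQ⟩ := exists_mul_eq_of_isUnit_fromRows (hSig ▸ hinv) (K * P₀) P₀
  have hX₁Q : (T : ℝ)⁻¹ • ((A₀ * X₀o + B₀ * U₀) * Φᵀ) * Q = (A₀ + B₀ * K) * P₀ := by
    calc _ = A₀ * (X₀bar * Q) + B₀ * (U₀bar * Q) := by
          simp only [U₀bar, X₀bar, Matrix.add_mul, smul_add, Matrix.mul_assoc, Matrix.smul_mul,
            Matrix.mul_smul]
      _ = (A₀ + B₀ * K) * P₀ := by rw [hXQ, hUQ, Matrix.add_mul, Matrix.mul_assoc]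
  refine ⟨Q, 0, P₀, hP₀, hXQ, Matrix.mul_zero _, ?_⟩
  rw [hX₁Q]
  exact posDef_fromBlocks_mul_of_posDef_sub_mul_mul_transpose hP₀ hstab

/-- Proposition 2, part (i): feasibility of the SDP under stabilizability. -/
theorem stmt_6 (n m T : ℕ) (hT : 1 ≤ T)
    (A₀ : Matrix (Fin n) (Fin n) ℝ) (B₀ : Matrix (Fin n) (Fin m) ℝ)
    (U₀ : Matrix (Fin m) (Fin T) ℝ) (X₀o : Matrix (Fin n) (Fin T) ℝ)
    (X₁o : Matrix (Fin n) (Fin T) ℝ) (hX₁o : X₁o = A₀ * X₀o + B₀ * U₀)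
    (Φo : Matrix (Fin m ⊕ Fin n) (Fin T) ℝ) (hΦo : Φo = fromRows U₀ X₀o)
    (Sigo : Matrix (Fin m ⊕ Fin n) (Fin m ⊕ Fin n) ℝ) (hSigo : Sigo = (T : ℝ)⁻¹ • (Φo * Φoᵀ))
    (hinv : IsUnit Sigo)
    (X₀obar : Matrix (Fin n) (Fin m ⊕ Fin n) ℝ) (hX₀obar : X₀obar = (T : ℝ)⁻¹ • (X₀o * Φoᵀ))
    (X₁obar : Matrix (Fin n) (Fin m ⊕ Fin n) ℝ) (hX₁obar : X₁obar = (T : ℝ)⁻¹ • (X₁o * Φoᵀ))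
    (K : Matrix (Fin m) (Fin n) ℝ) (P₀ : Matrix (Fin n) (Fin n) ℝ) (hP₀ : P₀.PosDef)
    (hstab : (P₀ - (A₀ + B₀ * K) * P₀ * (A₀ + B₀ * K)ᵀ).PosDef) :
    ∃ (Qx Qr : Matrix (Fin m ⊕ Fin n) (Fin n) ℝ) (P : Matrix (Fin n) (Fin n) ℝ),
      P.PosDef ∧ X₀obar * Qx = P ∧ X₀obar * Qr = (0 : Matrix (Fin n) (Fin n) ℝ) ∧
      (fromBlocks P (X₁obar * Qx) (X₁obar * Qx)ᵀ P).PosDef :=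
  stmt_6_general n m T A₀ B₀ U₀ X₀o X₁o hX₁o Φo hΦo Sigo hSigo hinv X₀obar hX₀obar X₁obar hX₁obar K
    P₀ hP₀ hstab
end

section
/- (Proposition 2, part (ii): matching from a zero-cost feasible SDP solution.) Suppose Q_x, Q_r ∈ ℝ^{(m+n)×n} and an invertible P ∈ ℝ^{n×n} satisfy X̄₁ᵒ·Q_x = A_M·P, X̄₁ᵒ·Q_r = B_M·P, X̄₀ᵒ·Q_x = P, and X̄₀ᵒ·Q_r = 0_{n×n}. Then the controller gains K_x := Ū₀·Q_x·P⁻¹ and K_r := Ū₀·Q_r·P⁻¹ solve the model-reference matching problem: A₀ + B₀·K_x = A_M and B₀·K_r = B_M. -/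
/-!
The data satisfy `X₁ᵒ = A₀ X₀ᵒ + B₀ U₀`, and right multiplication by `(1/T) Φᵒᵀ` preserves this
linear relation, so `X̄₁ᵒ = A₀ X̄₀ᵒ + B₀ Ū₀`. Multiplying by `Q` and using the constraints gives
`A_M P = A₀ P + B₀ Ū₀ Q_x` and `B_M P = B₀ Ū₀ Q_r`; cancelling the invertible `P` yields the
matching equations.
-/

open Matrix

section

variable {R : Type*} [CommRing R] {k l p q r : Type*}
  [Fintype k] [Fintype l] [Fintype p] [Fintype r] [DecidableEq r]

theorem dynamics_mul_right {X₁ : Matrix k l R} {A : Matrix k k R} {X₀ : Matrix k l R}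
    {B : Matrix k p R} {U : Matrix p l R} (h : X₁ = A * X₀ + B * U) (M : Matrix l q R) :
    X₁ * M = A * (X₀ * M) + B * (U * M) := by
  rw [h, Matrix.add_mul, Matrix.mul_assoc, Matrix.mul_assoc]

theorem closedLoop_eq_of_data {X₁ X₀ : Matrix k l R} {A : Matrix k k R} {S N : Matrix k r R}
    {B : Matrix k p R} {U : Matrix p l R} {Q : Matrix l r R} {P : Matrix r r R}
    (hX : X₁ * Q = A * (X₀ * Q) + B * (U * Q)) (hP : IsUnit P)
    (h₁ : X₁ * Q = N * P) (h₀ : X₀ * Q = S * P) :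
    A * S + B * (U * Q * P⁻¹) = N := by
  have hdet : IsUnit P.det := (isUnit_iff_isUnit_det P).mp hP
  calc A * S + B * (U * Q * P⁻¹) = (A * (S * P) + B * (U * Q)) * P⁻¹ := by
        rw [Matrix.add_mul, ← Matrix.mul_assoc A, Matrix.mul_assoc (A * S),
          mul_nonsing_inv _ hdet, Matrix.mul_one, Matrix.mul_assoc B]
    _ = N := by rw [← h₀, ← hX, h₁, mul_nonsing_inv_cancel_right _ _ hdet]

end

theorem stmt_7_general (n m T : ℕ)
    (A₀ : Matrix (Fin n) (Fin n) ℝ) (B₀ : Matrix (Fin n) (Fin m) ℝ)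
    (U₀ : Matrix (Fin m) (Fin T) ℝ) (X₀o : Matrix (Fin n) (Fin T) ℝ)
    (A_M B_M : Matrix (Fin n) (Fin n) ℝ)
    (X₁o : Matrix (Fin n) (Fin T) ℝ) (hX₁o : X₁o = A₀ * X₀o + B₀ * U₀)
    (Φo : Matrix (Fin m ⊕ Fin n) (Fin T) ℝ)
    (U₀bar : Matrix (Fin m) (Fin m ⊕ Fin n) ℝ) (hU₀bar : U₀bar = (T : ℝ)⁻¹ • (U₀ * Φoᵀ))
    (X₀obar : Matrix (Fin n) (Fin m ⊕ Fin n) ℝ) (hX₀obar : X₀obar = (T : ℝ)⁻¹ • (X₀o * Φoᵀ))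
    (X₁obar : Matrix (Fin n) (Fin m ⊕ Fin n) ℝ) (hX₁obar : X₁obar = (T : ℝ)⁻¹ • (X₁o * Φoᵀ))
    (Qx Qr : Matrix (Fin m ⊕ Fin n) (Fin n) ℝ) (P : Matrix (Fin n) (Fin n) ℝ)
    (hPinv : IsUnit P)
    (h1 : X₁obar * Qx = A_M * P) (h2 : X₁obar * Qr = B_M * P)
    (h3 : X₀obar * Qx = P) (h4 : X₀obar * Qr = (0 : Matrix (Fin n) (Fin n) ℝ))
    (Kx Kr : Matrix (Fin m) (Fin n) ℝ)
    (hKx : Kx = U₀bar * Qx * P⁻¹) (hKr : Kr = U₀bar * Qr * P⁻¹) :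
    A₀ + B₀ * Kx = A_M ∧ B₀ * Kr = B_M := by
  have hbar : X₁obar = A₀ * X₀obar + B₀ * U₀bar := by
    rw [hX₁obar, hX₀obar, hU₀bar, ← Matrix.mul_smul, ← Matrix.mul_smul, ← Matrix.mul_smul]
    exact dynamics_mul_right hX₁o _
  constructor
  · simpa [hKx] using
      closedLoop_eq_of_data (dynamics_mul_right hbar Qx) hPinv h1 (h3.trans (one_mul P).symm)
  · simpa [hKr] using
      closedLoop_eq_of_data (dynamics_mul_right hbar Qr) hPinv h2 (h4.trans (zero_mul P).symm)

/-- Proposition 2, part (ii): matching from a zero-cost feasible SDP solution. -/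
theorem stmt_7 (n m T : ℕ) (hT : 1 ≤ T)
    (A₀ : Matrix (Fin n) (Fin n) ℝ) (B₀ : Matrix (Fin n) (Fin m) ℝ)
    (U₀ : Matrix (Fin m) (Fin T) ℝ) (X₀o : Matrix (Fin n) (Fin T) ℝ)
    (A_M B_M : Matrix (Fin n) (Fin n) ℝ)
    (X₁o : Matrix (Fin n) (Fin T) ℝ) (hX₁o : X₁o = A₀ * X₀o + B₀ * U₀)
    (Φo : Matrix (Fin m ⊕ Fin n) (Fin T) ℝ) (hΦo : Φo = fromRows U₀ X₀o)
    (U₀bar : Matrix (Fin m) (Fin m ⊕ Fin n) ℝ) (hU₀bar : U₀bar = (T : ℝ)⁻¹ • (U₀ * Φoᵀ))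
    (X₀obar : Matrix (Fin n) (Fin m ⊕ Fin n) ℝ) (hX₀obar : X₀obar = (T : ℝ)⁻¹ • (X₀o * Φoᵀ))
    (X₁obar : Matrix (Fin n) (Fin m ⊕ Fin n) ℝ) (hX₁obar : X₁obar = (T : ℝ)⁻¹ • (X₁o * Φoᵀ))
    (Qx Qr : Matrix (Fin m ⊕ Fin n) (Fin n) ℝ) (P : Matrix (Fin n) (Fin n) ℝ)
    (hPinv : IsUnit P)
    (h1 : X₁obar * Qx = A_M * P) (h2 : X₁obar * Qr = B_M * P)
    (h3 : X₀obar * Qx = P) (h4 : X₀obar * Qr = (0 : Matrix (Fin n) (Fin n) ℝ))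
    (Kx Kr : Matrix (Fin m) (Fin n) ℝ)
    (hKx : Kx = U₀bar * Qx * P⁻¹) (hKr : Kr = U₀bar * Qr * P⁻¹) :
    A₀ + B₀ * Kx = A_M ∧ B₀ * Kr = B_M :=
  stmt_7_general n m T A₀ B₀ U₀ X₀o A_M B_M X₁o hX₁o Φo U₀bar hU₀bar X₀obar hX₀obar X₁obar hX₁obar
    Qx Qr P hPinv h1 h2 h3 h4 Kx Kr hKx hKr
end

section
/- (Proposition 2, part (ii): feasibility of the SDP under matching feasibility.) Suppose the sample covariance Σᵒ := (1/T)·Φᵒ·(Φᵒ)ᵀ is invertible, suppose the matching problem is feasible (there exist K_x, K_r ∈ ℝ^{m×n} with A₀ + B₀·K_x = A_M and B₀·K_r = B_M), and suppose the reference model is stable in the sense that there exists a positive definite P₀ ∈ ℝ^{n×n} with P₀ − A_M·P₀·A_Mᵀ positive definite. Then there exist Q_x, Q_r ∈ ℝ^{(m+n)×n} and a positive definite P ∈ ℝ^{n×n} attaining zero cost and satisfying all constraints of the SDP: X̄₁ᵒ·Q_x = A_M·P, X̄₁ᵒ·Q_r = B_M·P, X̄₀ᵒ·Q_x = P, X̄₀ᵒ·Q_r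 = 0_{n×n}, and the 2n×2n block matrix [[P, X̄₁ᵒ·Q_x], [(X̄₁ᵒ·Q_x)ᵀ, P]] is positive definite. -/
/-!
The state data factor as `X₁ᵒ = [B₀ A₀] Φᵒ` and `X₀ᵒ = [0 I] Φᵒ`, so the projected data are
`X̄₁ᵒ = [B₀ A₀] Σᵒ` and `X̄₀ᵒ = [0 I] Σᵒ`. Taking `P = P₀`, `Q_x = (Σᵒ)⁻¹ [K_x P₀; P₀]` and
`Q_r = (Σᵒ)⁻¹ [K_r P₀; 0]` reduces the equality constraints to the matching conditions
`(A₀ + B₀ K_x) P₀ = A_M P₀` and `B₀ K_r P₀ = B_M P₀`. The block constraint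
`[[P₀, A_M P₀], [(A_M P₀)ᵀ, P₀]] ≻ 0` is, by the Schur complement, the Lyapunov inequality
`P₀ - A_M P₀ A_Mᵀ ≻ 0`.
-/

open Matrix

open scoped ComplexOrder

namespace Matrix

theorem posDef_fromBlocks₂₂ {𝕜 m n : Type*} [RCLike 𝕜] [Fintype m] [Fintype n]
    [DecidableEq m] [DecidableEq n] (A : Matrix m m 𝕜) (B : Matrix m n 𝕜) {D : Matrix n n 𝕜}
    (hD : D.PosDef) (hS : (A - B * D⁻¹ * Bᴴ).PosDef) : (fromBlocks A B Bᴴ D).PosDef := by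
  have := hD.isUnit.invertible
  rw [((PosDef.fromBlocks₂₂ A B hD).mpr hS.posSemidef).posDef_iff_det_ne_zero,
    det_fromBlocks₂₂, invOf_eq_nonsing_inv]
  exact mul_ne_zero hD.det_pos.ne' hS.det_pos.ne'

theorem posDef_fromBlocks_mul_of_posDef_sub {𝕜 n : Type*} [RCLike 𝕜] [Fintype n] [DecidableEq n]
    {P : Matrix n n 𝕜} (hP : P.PosDef) (A : Matrix n n 𝕜) (hA : (P - A * P * Aᴴ).PosDef) :
    (fromBlocks P (A * P) (A * P)ᴴ P).PosDef := by
  have hSchur : P - A * P * P⁻¹ * (A * P)ᴴ = P - A * P * Aᴴ := by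
    rw [conjTranspose_mul, hP.isHermitian.eq, Matrix.mul_assoc (A * P),
      nonsing_inv_mul_cancel_left _ _ ((isUnit_iff_isUnit_det _).mp hP.isUnit), Matrix.mul_assoc]
  exact posDef_fromBlocks₂₂ P (A * P) hP (hSchur ▸ hA)

theorem smul_mul_mul_transpose_mul_inv_cancel {k l t : Type*} [Fintype l] [Fintype t]
    [DecidableEq l] {R : Type*} [CommRing R] (c : R) (M : Matrix k l R) (Φ : Matrix l t R)
    {j : Type*} (N : Matrix l j R) (h : IsUnit (c • (Φ * Φᵀ))) :
    c • (M * Φ * Φᵀ) * ((c • (Φ * Φᵀ))⁻¹ * N) = M * N := by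
  rw [Matrix.mul_assoc, ← Matrix.mul_smul, Matrix.mul_assoc,
    mul_nonsing_inv_cancel_left _ _ ((isUnit_iff_isUnit_det _).mp h)]

end Matrix

theorem stmt_8_general (n m T : ℕ)
    (A₀ : Matrix (Fin n) (Fin n) ℝ) (B₀ : Matrix (Fin n) (Fin m) ℝ)
    (U₀ : Matrix (Fin m) (Fin T) ℝ) (X₀o : Matrix (Fin n) (Fin T) ℝ)
    (A_M B_M : Matrix (Fin n) (Fin n) ℝ)
    (X₁o : Matrix (Fin n) (Fin T) ℝ) (hX₁o : X₁o = A₀ * X₀o + B₀ * U₀)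
    (Φo : Matrix (Fin m ⊕ Fin n) (Fin T) ℝ) (hΦo : Φo = fromRows U₀ X₀o)
    (Sigo : Matrix (Fin m ⊕ Fin n) (Fin m ⊕ Fin n) ℝ) (hSigo : Sigo = (T : ℝ)⁻¹ • (Φo * Φoᵀ))
    (hinv : IsUnit Sigo)
    (X₀obar : Matrix (Fin n) (Fin m ⊕ Fin n) ℝ) (hX₀obar : X₀obar = (T : ℝ)⁻¹ • (X₀o * Φoᵀ))
    (X₁obar : Matrix (Fin n) (Fin m ⊕ Fin n) ℝ) (hX₁obar : X₁obar = (T : ℝ)⁻¹ • (X₁o * Φoᵀ))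
    (Kx Kr : Matrix (Fin m) (Fin n) ℝ)
    (hmatchA : A₀ + B₀ * Kx = A_M) (hmatchB : B₀ * Kr = B_M)
    (P₀ : Matrix (Fin n) (Fin n) ℝ) (hP₀ : P₀.PosDef)
    (hMstab : (P₀ - A_M * P₀ * A_Mᵀ).PosDef) :
    ∃ (Qx Qr : Matrix (Fin m ⊕ Fin n) (Fin n) ℝ) (P : Matrix (Fin n) (Fin n) ℝ),
      P.PosDef ∧
      X₁obar * Qx = A_M * P ∧ X₁obar * Qr = B_M * P ∧
      X₀obar * Qx = P ∧ X₀obar * Qr = (0 : Matrix (Fin n) (Fin n) ℝ) ∧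
      (fromBlocks P (X₁obar * Qx) (X₁obar * Qx)ᵀ P).PosDef := by
  subst X₁obar X₀obar X₁o
  have hcancel {j : Type} (M : Matrix (Fin n) (Fin m ⊕ Fin n) ℝ)
      (N : Matrix (Fin m ⊕ Fin n) j ℝ) : (T : ℝ)⁻¹ • (M * Φo * Φoᵀ) * (Sigo⁻¹ * N) = M * N := by
    subst Sigo
    exact smul_mul_mul_transpose_mul_inv_cancel _ M Φo N hinv
  have hX₁ : A₀ * X₀o + B₀ * U₀ = fromCols B₀ A₀ * Φo := by
    rw [hΦo, fromCols_mul_fromRows, add_comm]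
  have hX₀ : X₀o = (fromCols 0 1 : Matrix (Fin n) (Fin m ⊕ Fin n) ℝ) * Φo := by
    rw [hΦo, fromCols_mul_fromRows, Matrix.zero_mul, zero_add, Matrix.one_mul]
  have hQx : (T : ℝ)⁻¹ • ((A₀ * X₀o + B₀ * U₀) * Φoᵀ) * (Sigo⁻¹ * fromRows (Kx * P₀) P₀) =
      A_M * P₀ := by
    rw [hX₁, hcancel, fromCols_mul_fromRows, ← Matrix.mul_assoc, ← Matrix.add_mul, add_comm,
      hmatchA]
  refine ⟨_, Sigo⁻¹ * fromRows (Kr * P₀) (0 : Matrix (Fin n) (Fin n) ℝ), P₀, hP₀, hQx,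
    ?_, ?_, ?_, ?_⟩
  · rw [hX₁, hcancel, fromCols_mul_fromRows, ← Matrix.mul_assoc, hmatchB, Matrix.mul_zero,
      add_zero]
  · rw [hX₀, hcancel, fromCols_mul_fromRows, Matrix.zero_mul, zero_add, Matrix.one_mul]
  · rw [hX₀, hcancel, fromCols_mul_fromRows, Matrix.zero_mul, zero_add, Matrix.one_mul]
  · rw [hQx]
    rw [← conjTranspose_eq_transpose_of_trivial] at hMstab ⊢
    exact posDef_fromBlocks_mul_of_posDef_sub hP₀ A_M hMstab

/-- Proposition 2, part (ii): feasibility of the SDP under matching feasibility. -/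
theorem stmt_8 (n m T : ℕ) (hT : 1 ≤ T)
    (A₀ : Matrix (Fin n) (Fin n) ℝ) (B₀ : Matrix (Fin n) (Fin m) ℝ)
    (U₀ : Matrix (Fin m) (Fin T) ℝ) (X₀o : Matrix (Fin n) (Fin T) ℝ)
    (A_M B_M : Matrix (Fin n) (Fin n) ℝ)
    (X₁o : Matrix (Fin n) (Fin T) ℝ) (hX₁o : X₁o = A₀ * X₀o + B₀ * U₀)
    (Φo : Matrix (Fin m ⊕ Fin n) (Fin T) ℝ) (hΦo : Φo = fromRows U₀ X₀o)
    (Sigo : Matrix (Fin m ⊕ Fin n) (Fin m ⊕ Fin n) ℝ) (hSigo : Sigo = (T : ℝ)⁻¹ • (Φo * Φoᵀ))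
    (hinv : IsUnit Sigo)
    (X₀obar : Matrix (Fin n) (Fin m ⊕ Fin n) ℝ) (hX₀obar : X₀obar = (T : ℝ)⁻¹ • (X₀o * Φoᵀ))
    (X₁obar : Matrix (Fin n) (Fin m ⊕ Fin n) ℝ) (hX₁obar : X₁obar = (T : ℝ)⁻¹ • (X₁o * Φoᵀ))
    (Kx Kr : Matrix (Fin m) (Fin n) ℝ)
    (hmatchA : A₀ + B₀ * Kx = A_M) (hmatchB : B₀ * Kr = B_M)
    (P₀ : Matrix (Fin n) (Fin n) ℝ) (hP₀ : P₀.PosDef)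
    (hMstab : (P₀ - A_M * P₀ * A_Mᵀ).PosDef) :
    ∃ (Qx Qr : Matrix (Fin m ⊕ Fin n) (Fin n) ℝ) (P : Matrix (Fin n) (Fin n) ℝ),
      P.PosDef ∧
      X₁obar * Qx = A_M * P ∧ X₁obar * Qr = B_M * P ∧
      X₀obar * Qx = P ∧ X₀obar * Qr = (0 : Matrix (Fin n) (Fin n) ℝ) ∧
      (fromBlocks P (X₁obar * Qx) (X₁obar * Qx)ᵀ P).PosDef :=
  stmt_8_general n m T A₀ B₀ U₀ X₀o A_M B_M X₁o hX₁o Φo hΦo Sigo hSigo hinv X₀obar hX₀obar X₁obar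
    hX₁obar Kx Kr hmatchA hmatchB P₀ hP₀ hMstab
end

section
/- (Proposition 3, unbiasedness of the bias-corrected matrix: E[X̄₀ᵇᶜ] = X̄₀ᵒ.) Let the noise matrix V₀ ∈ ℝ^{n×T} have columns v(0), …, v(T−1), where the scalar components {v(t)_i} form a mutually independent family, each distributed N(0, σ²). Define the noisy state matrix X₀ := X₀ᵒ + V₀, the regressors Φ := [U₀; X₀] and Φᵒ := [U₀; X₀ᵒ] (vertical blocks in ℝ^{(m+n)×T}), the projected matrix X̄₀ := (1/T)·X₀·Φᵀ, the bias-correcting matrix Ψ := [0_{n×m}, T·σ²·I_n] (horizontal block in ℝ^{n×(m+n)}), and X̄₀ᵇᶜ := X̄₀ − (1/T)·Ψ. Then the entrywise expectation of X̄₀ᵇᶜ equals the deterministic noise-free matrix X̄₀ᵒ := (1/T)·X₀ᵒ·(Φᵒ)ᵀ. -/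
open Matrix MeasureTheory ProbabilityTheory

/-!
Write `X₀ = X₀ᵒ + V₀` and `Φ = Φᵒ + [0; V₀]`. Each entry of `X₀ Φᵀ` is a sum over `t` of products
`(a + ξ) (b + η)` with `a, b` deterministic and `ξ, η` centred noise entries, whose expectation is
`a b + E[ξ η]`. By independence `E[v(t)ᵢ v(t)_b] = σ² δᵢ_b`, so `E[X₀ Φᵀ] = X₀ᵒ (Φᵒ)ᵀ + Ψ`, and
subtracting `Ψ / T` removes exactly this bias.
-/

open scoped NNReal

namespace ProbabilityTheory.HasLaw

variable {Ω : Type*} [MeasurableSpace Ω] {μ : Measure Ω} {X : Ω → ℝ} {m : ℝ} {s : ℝ≥0}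

lemma memLp_of_gaussianReal (hX : HasLaw X (gaussianReal m s) μ) (p : ℝ≥0) : MemLp X p μ :=
  (hX.map_eq ▸ memLp_id_gaussianReal p).comp_of_map hX.aemeasurable

lemma integral_of_gaussianReal (hX : HasLaw X (gaussianReal m s) μ) : ∫ ω, X ω ∂μ = m :=
  hX.integral_eq.trans integral_id_gaussianReal

lemma integral_sq_of_gaussianReal (hX : HasLaw X (gaussianReal 0 s) μ) :
    ∫ ω, X ω ^ 2 ∂μ = s := by
  rw [← variance_of_integral_eq_zero hX.aemeasurable hX.integral_of_gaussianReal,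
    hX.variance_eq, variance_id_gaussianReal]

end ProbabilityTheory.HasLaw

section NoiseMoments

variable {Ω : Type*} [MeasurableSpace Ω] {μ : Measure Ω}

lemma integral_mul_eq_ite_of_iIndepFun_gaussianReal {ι : Type*} [DecidableEq ι] {X : ι → Ω → ℝ}
    {s : ℝ≥0} (hind : iIndepFun X μ) (hX : ∀ i, HasLaw (X i) (gaussianReal 0 s) μ) (i j : ι) :
    ∫ ω, X i ω * X j ω ∂μ = if i = j then (s : ℝ) else 0 := by
  split_ifs with hij
  · subst hij
    simp_rw [← sq]
    exact (hX i).integral_sq_of_gaussianReal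
  · rw [(hind.indepFun hij).integral_fun_mul_eq_mul_integral
      ((hX i).memLp_of_gaussianReal 2).aestronglyMeasurable
      ((hX j).memLp_of_gaussianReal 2).aestronglyMeasurable,
      (hX i).integral_of_gaussianReal, zero_mul]

lemma integrable_const_add_mul_const_add [IsFiniteMeasure μ] {X Y : Ω → ℝ} (hX : MemLp X 2 μ)
    (hY : MemLp Y 2 μ) (a b : ℝ) : Integrable (fun ω => (a + X ω) * (b + Y ω)) μ :=
  ((memLp_const a).add hX).integrable_mul ((memLp_const b).add hY)

lemma integral_const_add_mul_const_add [IsProbabilityMeasure μ] {X Y : Ω → ℝ} (hX : MemLp X 2 μ)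
    (hY : MemLp Y 2 μ) (hX₀ : ∫ ω, X ω ∂μ = 0) (hY₀ : ∫ ω, Y ω ∂μ = 0) (a b : ℝ) :
    ∫ ω, (a + X ω) * (b + Y ω) ∂μ = a * b + ∫ ω, X ω * Y ω ∂μ := by
  have hXY : Integrable (fun ω => X ω * Y ω) μ := hX.integrable_mul hY
  have haY : Integrable (fun ω => a * Y ω) μ := (hY.integrable one_le_two).const_mul a
  have hbX : Integrable (fun ω => b * X ω) μ := (hX.integrable one_le_two).const_mul b
  have h₁ : Integrable (fun ω => a * b + a * Y ω) μ := (integrable_const _).add haY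
  have h₂ : Integrable (fun ω => a * b + a * Y ω + b * X ω) μ := h₁.add hbX
  calc ∫ ω, (a + X ω) * (b + Y ω) ∂μ
      = ∫ ω, a * b + a * Y ω + b * X ω + X ω * Y ω ∂μ := by congr 1; ext ω; ring
    _ = a * b + ∫ ω, X ω * Y ω ∂μ := by
      rw [integral_add h₂ hXY, integral_add h₁ hbX,
        integral_add (integrable_const _) haY, integral_const, integral_const_mul,
        integral_const_mul, hX₀, hY₀]
      simp

variable {ι κ τ : Type*} [Fintype τ] {N : Ω → Matrix ι τ ℝ} {M : Ω → Matrix κ τ ℝ}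

lemma integrable_add_mul_add_transpose_apply [IsFiniteMeasure μ]
    (hN : ∀ i t, MemLp (fun ω => N ω i t) 2 μ) (hM : ∀ j t, MemLp (fun ω => M ω j t) 2 μ)
    (A : Matrix ι τ ℝ) (B : Matrix κ τ ℝ) (i : ι) (j : κ) :
    Integrable (fun ω => ((A + N ω) * (B + M ω)ᵀ) i j) μ := by
  simp only [mul_apply, Matrix.add_apply, transpose_apply]
  exact integrable_finsetSum _ fun t _ =>
    integrable_const_add_mul_const_add (hN i t) (hM j t) _ _

lemma integral_add_mul_add_transpose_apply [IsProbabilityMeasure μ]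
    (hN : ∀ i t, MemLp (fun ω => N ω i t) 2 μ) (hM : ∀ j t, MemLp (fun ω => M ω j t) 2 μ)
    (hN₀ : ∀ i t, ∫ ω, N ω i t ∂μ = 0) (hM₀ : ∀ j t, ∫ ω, M ω j t ∂μ = 0)
    (A : Matrix ι τ ℝ) (B : Matrix κ τ ℝ) (i : ι) (j : κ) :
    ∫ ω, ((A + N ω) * (B + M ω)ᵀ) i j ∂μ
      = (A * Bᵀ) i j + ∑ t, ∫ ω, N ω i t * M ω j t ∂μ := by
  simp only [mul_apply, Matrix.add_apply, transpose_apply]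
  rw [integral_finsetSum _ fun t _ => integrable_const_add_mul_const_add (hN i t) (hM j t) _ _,
    ← Finset.sum_add_distrib]
  exact Finset.sum_congr rfl fun t _ =>
    integral_const_add_mul_const_add (hN i t) (hM j t) (hN₀ i t) (hM₀ j t) _ _

end NoiseMoments

theorem stmt_10_general {Ω : Type*} [MeasurableSpace Ω] (μ : Measure Ω) [IsProbabilityMeasure μ]
    (n m T : ℕ) (σ : ℝ)
    (U₀ : Matrix (Fin m) (Fin T) ℝ) (X₀o : Matrix (Fin n) (Fin T) ℝ)
    (v : Fin T → Ω → Fin n → ℝ)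
    (hmeas : ∀ t i, Measurable fun ω => v t ω i)
    (hindep : iIndepFun (m := fun _ : Fin T × Fin n => (inferInstance : MeasurableSpace ℝ))
      (fun p ω => v p.1 ω p.2) μ)
    (hdist : ∀ t i, Measure.map (fun ω => v t ω i) μ
      = gaussianReal 0 ⟨σ ^ 2, sq_nonneg σ⟩)
    -- noise matrix, noisy data, regressors and projected matrices
    (V₀ : Ω → Matrix (Fin n) (Fin T) ℝ) (hV₀ : ∀ ω, V₀ ω = Matrix.of fun i t => v t ω i)
    (X₀ : Ω → Matrix (Fin n) (Fin T) ℝ) (hX₀ : ∀ ω, X₀ ω = X₀o + V₀ ω)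
    (Φ : Ω → Matrix (Fin m ⊕ Fin n) (Fin T) ℝ) (hΦ : ∀ ω, Φ ω = fromRows U₀ (X₀ ω))
    (Φo : Matrix (Fin m ⊕ Fin n) (Fin T) ℝ) (hΦo : Φo = fromRows U₀ X₀o)
    (X₀bar : Ω → Matrix (Fin n) (Fin m ⊕ Fin n) ℝ)
    (hX₀bar : ∀ ω, X₀bar ω = (T : ℝ)⁻¹ • (X₀ ω * (Φ ω)ᵀ))
    (Ψ : Matrix (Fin n) (Fin m ⊕ Fin n) ℝ)
    (hΨ : Ψ = fromCols (0 : Matrix (Fin n) (Fin m) ℝ)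
      (((T : ℝ) * σ ^ 2) • (1 : Matrix (Fin n) (Fin n) ℝ)))
    (X₀bc : Ω → Matrix (Fin n) (Fin m ⊕ Fin n) ℝ)
    (hX₀bc : ∀ ω, X₀bc ω = X₀bar ω - (T : ℝ)⁻¹ • Ψ)
    (X₀obar : Matrix (Fin n) (Fin m ⊕ Fin n) ℝ) (hX₀obar : X₀obar = (T : ℝ)⁻¹ • (X₀o * Φoᵀ)) :
    ∀ (i : Fin n) (j : Fin m ⊕ Fin n), ∫ ω, X₀bc ω i j ∂μ = X₀obar i j := by
  have hlaw : ∀ p : Fin T × Fin n,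
      HasLaw (fun ω => v p.1 ω p.2) (gaussianReal 0 ⟨σ ^ 2, sq_nonneg σ⟩) μ :=
    fun p => ⟨(hmeas p.1 p.2).aemeasurable, hdist p.1 p.2⟩
  set W : Ω → Matrix (Fin m ⊕ Fin n) (Fin T) ℝ := fun ω => fromRows 0 (V₀ ω)
  have hV : ∀ i t, MemLp (fun ω => V₀ ω i t) 2 μ ∧ ∫ ω, V₀ ω i t ∂μ = 0 := fun i t => by
    simpa [hV₀] using
      ⟨(hlaw (t, i)).memLp_of_gaussianReal 2, (hlaw (t, i)).integral_of_gaussianReal⟩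
  have hW : ∀ j t, MemLp (fun ω => W ω j t) 2 μ ∧ ∫ ω, W ω j t ∂μ = 0 := by
    rintro (a | b) t
    · simp [W]
    · simpa [W] using hV b t
  have hnoise : ∀ i j, ∑ t, ∫ ω, V₀ ω i t * W ω j t ∂μ = Ψ i j := by
    rintro i (a | b)
    · simp [W, hΨ]
    · simp [W, hV₀, hΨ, integral_mul_eq_ite_of_iIndepFun_gaussianReal hindep hlaw (_, i) (_, b),
        Matrix.one_apply]
      rfl
  have hprod : ∀ ω, X₀ ω * (Φ ω)ᵀ = (X₀o + V₀ ω) * (Φo + W ω)ᵀ := fun ω => by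
    congr 2
    · exact hX₀ ω
    · ext (a | b) t <;> simp [hΦ, hΦo, hX₀, W]
  intro i j
  calc ∫ ω, X₀bc ω i j ∂μ
      = (T : ℝ)⁻¹ * ∫ ω, ((X₀o + V₀ ω) * (Φo + W ω)ᵀ) i j ∂μ - (T : ℝ)⁻¹ * Ψ i j := by
        simp only [hX₀bc, hX₀bar, hprod, Matrix.sub_apply, Matrix.smul_apply, smul_eq_mul]
        rw [integral_sub ((integrable_add_mul_add_transpose_apply (fun i t => (hV i t).1)
          (fun j t => (hW j t).1) _ _ i j).const_mul _) (integrable_const _), integral_const_mul]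
        simp
    _ = X₀obar i j := by
        rw [integral_add_mul_add_transpose_apply (fun i t => (hV i t).1) (fun j t => (hW j t).1)
          (fun i t => (hV i t).2) (fun j t => (hW j t).2), hnoise, hX₀obar]
        simp [mul_add]

/-- Proposition 3, unbiasedness of the bias-corrected matrix: `E[X̄₀ᵇᶜ] = X̄₀ᵒ`. -/
theorem stmt_10 {Ω : Type*} [MeasurableSpace Ω] (μ : Measure Ω) [IsProbabilityMeasure μ]
    (n m T : ℕ) (hT : 1 ≤ T) (σ : ℝ) (hσ : 0 < σ)
    (U₀ : Matrix (Fin m) (Fin T) ℝ) (X₀o : Matrix (Fin n) (Fin T) ℝ)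
    (v : Fin T → Ω → Fin n → ℝ)
    (hmeas : ∀ t i, Measurable fun ω => v t ω i)
    (hindep : iIndepFun (m := fun _ : Fin T × Fin n => (inferInstance : MeasurableSpace ℝ))
      (fun p ω => v p.1 ω p.2) μ)
    (hdist : ∀ t i, Measure.map (fun ω => v t ω i) μ
      = gaussianReal 0 ⟨σ ^ 2, sq_nonneg σ⟩)
    -- noise matrix, noisy data, regressors and projected matrices
    (V₀ : Ω → Matrix (Fin n) (Fin T) ℝ) (hV₀ : ∀ ω, V₀ ω = Matrix.of fun i t => v t ω i)
    (X₀ : Ω → Matrix (Fin n) (Fin T) ℝ) (hX₀ : ∀ ω, X₀ ω = X₀o + V₀ ω)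
    (Φ : Ω → Matrix (Fin m ⊕ Fin n) (Fin T) ℝ) (hΦ : ∀ ω, Φ ω = fromRows U₀ (X₀ ω))
    (Φo : Matrix (Fin m ⊕ Fin n) (Fin T) ℝ) (hΦo : Φo = fromRows U₀ X₀o)
    (X₀bar : Ω → Matrix (Fin n) (Fin m ⊕ Fin n) ℝ)
    (hX₀bar : ∀ ω, X₀bar ω = (T : ℝ)⁻¹ • (X₀ ω * (Φ ω)ᵀ))
    (Ψ : Matrix (Fin n) (Fin m ⊕ Fin n) ℝ)
    (hΨ : Ψ = fromCols (0 : Matrix (Fin n) (Fin m) ℝ)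
      (((T : ℝ) * σ ^ 2) • (1 : Matrix (Fin n) (Fin n) ℝ)))
    (X₀bc : Ω → Matrix (Fin n) (Fin m ⊕ Fin n) ℝ)
    (hX₀bc : ∀ ω, X₀bc ω = X₀bar ω - (T : ℝ)⁻¹ • Ψ)
    (X₀obar : Matrix (Fin n) (Fin m ⊕ Fin n) ℝ) (hX₀obar : X₀obar = (T : ℝ)⁻¹ • (X₀o * Φoᵀ)) :
    ∀ (i : Fin n) (j : Fin m ⊕ Fin n), ∫ ω, X₀bc ω i j ∂μ = X₀obar i j :=
  stmt_10_general μ n m T σ U₀ X₀o v hmeas hindep hdist V₀ hV₀ X₀ hX₀ Φ hΦ Φo hΦo X₀bar hX₀bar Ψ hΨ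
    X₀bc hX₀bc X₀obar hX₀obar
end

section
/- (Proposition 3, condition (C2): almost-sure consistency of the shifted data matrix.) Let (v(t))_{t∈ℕ} be random vectors in ℝⁿ whose scalar components {v(t)_i : t ∈ ℕ, 1 ≤ i ≤ n} form a mutually independent family, each distributed N(0, σ²). Assume the deterministic sequences are bounded: there exist C_u, C_x such that ‖u(t)‖ ≤ C_u and ‖xᵒ(t)‖ ≤ C_x for all t. For each T ≥ 1 form the matrices U₀(T), X₀ᵒ(T), X₁ᵒ(T), V₀(T), V₁(T) whose columns are u(0),…,u(T−1); xᵒ(0),…,xᵒ(T−1); xᵒ(1),…,xᵒ(T); v(0),…,v(T−1); v(1),…,v(T), respectively; set X₀(T) := X₀ᵒ(T) + V₀(T), X₁(T) := X₁ᵒ(T) + V₁(T), Φ(T) := [U₀(T); X₀(T)], Φᵒ(T) := [U₀(T); X₀ᵒ(T)], X̄₁(T) := (1/T)·X₁(T)·Φ(T)ᵀ, and X̄₁ᵒ(T) := (1/T)·X₁ᵒ(T)·Φᵒ(T)ᵀ. Then, almost surely, X̄₁(T) − X̄₁ᵒ(T) → 0_{n×(m+n)} as T → ∞. -/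
open Matrix MeasureTheory ProbabilityTheory Filter

/-- The matrix whose `T` columns are `f 0, …, f (T-1)`. -/
noncomputable def colMat {d : ℕ} (f : ℕ → Fin d → ℝ) (T : ℕ) : Matrix (Fin d) (Fin T) ℝ :=
  Matrix.of fun i t => f t i

/-!
Subtracting the noise-free matrix leaves, entry by entry, averages `T⁻¹ ∑ a t * v (t + d) j` of
the noise against bounded deterministic weights, and averages `T⁻¹ ∑ v (t + 1) l * v t k` of
lag-one noise products. Each tends to zero almost surely by a fourth-moment strong law: for
centered summands with bounded fourth moments, each independent of the preceding partial sum,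
`E (S T)⁴ = O(T²)`, hence `∑ E (S T / T)⁴ < ∞` and `S T / T → 0` almost surely. The lag-one
products are not of this kind, but their even- and odd-indexed subsequences are.
-/

open Finset Topology

section FourthMoment

variable {Ω : Type*} [MeasurableSpace Ω] {μ : Measure Ω}

lemma MeasureTheory.MemLp.integrable_pow_of_le [IsFiniteMeasure μ] {X : Ω → ℝ} {p : ℕ}
    (hX : MemLp X p μ) {k : ℕ} (hk : k ≤ p) : Integrable (fun ω => X ω ^ k) μ := by
  refine (hX.mono_exponent (by exact_mod_cast hk)).integrable_norm_pow'.mono'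
    (hX.1.pow k) (ae_of_all _ fun ω => ?_)
  simp [norm_pow]

lemma ProbabilityTheory.IndepFun.integral_add_pow [IsProbabilityMeasure μ] {X Y : Ω → ℝ}
    (hXY : IndepFun X Y μ) {p : ℕ} (hX : MemLp X p μ) (hY : MemLp Y p μ) :
    ∫ ω, (X ω + Y ω) ^ p ∂μ
      = ∑ k ∈ range (p + 1), (∫ ω, X ω ^ k ∂μ) * (∫ ω, Y ω ^ (p - k) ∂μ) * p.choose k := by
  have hterm : ∀ k ∈ range (p + 1),
      Integrable (fun ω => X ω ^ k * Y ω ^ (p - k) * p.choose k) μ := fun k hk =>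
    ((hXY.comp (measurable_id.pow_const k) (measurable_id.pow_const (p - k))).integrable_mul
      (hX.integrable_pow_of_le (by simpa [Nat.lt_succ_iff] using hk))
      (hY.integrable_pow_of_le (Nat.sub_le p k))).mul_const _
  simp_rw [add_pow]
  rw [integral_finsetSum _ hterm]
  refine Finset.sum_congr rfl fun k _ => ?_
  rw [integral_mul_const, hXY.integral_fun_comp_mul_comp (f := fun x => x ^ k)
    (g := fun x => x ^ (p - k)) hX.1.aemeasurable hY.1.aemeasurable (by fun_prop) (by fun_prop)]

lemma ProbabilityTheory.IndepFun.integral_add_sq [IsProbabilityMeasure μ] {X Y : Ω → ℝ}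
    (hXY : IndepFun X Y μ) (hX : MemLp X 2 μ) (hY : MemLp Y 2 μ) (hX0 : μ[X] = 0) (hY0 : μ[Y] = 0) :
    ∫ ω, (X ω + Y ω) ^ 2 ∂μ = ∫ ω, X ω ^ 2 ∂μ + ∫ ω, Y ω ^ 2 ∂μ := by
  simp [hXY.integral_add_pow hX hY, sum_range_succ, hX0, hY0, add_comm]

lemma ProbabilityTheory.IndepFun.integral_add_pow_four [IsProbabilityMeasure μ] {X Y : Ω → ℝ}
    (hXY : IndepFun X Y μ) (hX : MemLp X 4 μ) (hY : MemLp Y 4 μ) (hX0 : μ[X] = 0) (hY0 : μ[Y] = 0) :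
    ∫ ω, (X ω + Y ω) ^ 4 ∂μ
      = ∫ ω, X ω ^ 4 ∂μ + 6 * (∫ ω, X ω ^ 2 ∂μ) * (∫ ω, Y ω ^ 2 ∂μ) + ∫ ω, Y ω ^ 4 ∂μ := by
  simp [hXY.integral_add_pow hX hY, sum_range_succ, hX0, hY0, Nat.choose]
  ring

lemma tendsto_zero_of_tendsto_pow_zero {α : Type*} {l : Filter α} {f : α → ℝ} {n : ℕ} (hn : n ≠ 0)
    (hf : Tendsto (fun a => f a ^ n) l (𝓝 0)) : Tendsto f l (𝓝 0) := by
  have hroot := hf.abs.rpow_const (p := (n : ℝ)⁻¹) (Or.inr (by positivity))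
  rw [abs_zero, Real.zero_rpow (by positivity)] at hroot
  refine (tendsto_zero_iff_abs_tendsto_zero f).mpr (hroot.congr fun a => ?_)
  rw [abs_pow, Real.pow_rpow_inv_natCast (abs_nonneg _) hn]
  rfl

lemma ae_tendsto_zero_of_summable_integral {Y : ℕ → Ω → ℝ} (hY : ∀ T, Integrable (Y T) μ)
    (hY0 : ∀ T ω, 0 ≤ Y T ω) (hsum : Summable fun T => ∫ ω, Y T ω ∂μ) :
    ∀ᵐ ω ∂μ, Tendsto (fun T => Y T ω) atTop (𝓝 0) := by
  have hmeas : ∀ T, AEMeasurable (fun ω => ENNReal.ofReal (Y T ω)) μ :=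
    fun T => (hY T).aemeasurable.ennreal_ofReal
  have hfin : ∫⁻ ω, ∑' T, ENNReal.ofReal (Y T ω) ∂μ ≠ ⊤ := by
    rw [lintegral_tsum hmeas]
    simp_rw [← ofReal_integral_eq_lintegral_ofReal (hY _) (ae_of_all _ (hY0 _))]
    rw [← ENNReal.ofReal_tsum_of_nonneg (fun T => integral_nonneg (hY0 T)) hsum]
    exact ENNReal.ofReal_ne_top
  filter_upwards [ae_lt_top' (AEMeasurable.tsum hmeas) hfin] with ω hω
  have h := (ENNReal.tendsto_toReal ENNReal.zero_ne_top).comp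
    (ENNReal.tendsto_atTop_zero_of_tsum_ne_top hω.ne)
  simpa [Function.comp_def, ENNReal.toReal_ofReal (hY0 _ ω)] using h

variable [IsProbabilityMeasure μ] {ξ : ℕ → Ω → ℝ} {M₂ M₄ : ℝ}

lemma moment_bounds_sum_range (hξ : ∀ t, MemLp (ξ t) 4 μ) (hξ0 : ∀ t, μ[ξ t] = 0)
    (h₂ : ∀ t, ∫ ω, ξ t ω ^ 2 ∂μ ≤ M₂) (h₄ : ∀ t, ∫ ω, ξ t ω ^ 4 ∂μ ≤ M₄)
    (hind : ∀ T, IndepFun (fun ω => ∑ t ∈ range T, ξ t ω) (ξ T) μ) (T : ℕ) :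
    ∫ ω, (∑ t ∈ range T, ξ t ω) ^ 2 ∂μ ≤ T * M₂ ∧
      ∫ ω, (∑ t ∈ range T, ξ t ω) ^ 4 ∂μ ≤ (M₄ + 3 * M₂ ^ 2) * T ^ 2 := by
  induction T with
  | zero => simp
  | succ T ih =>
    have hS : MemLp (fun ω => ∑ t ∈ range T, ξ t ω) 4 μ := memLp_finsetSum _ fun t _ => hξ t
    have hS0 : ∫ ω, ∑ t ∈ range T, ξ t ω ∂μ = 0 := by
      rw [integral_finsetSum _ fun t _ => (hξ t).integrable (by norm_num)]
      simp [hξ0]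
    simp_rw [sum_range_succ]
    rw [(hind T).integral_add_sq (hS.mono_exponent (by norm_num))
        ((hξ T).mono_exponent (by norm_num)) hS0 (hξ0 T),
      (hind T).integral_add_pow_four hS (hξ T) hS0 (hξ0 T)]
    obtain ⟨ih₂, ih₄⟩ := ih
    have hM₄ : 0 ≤ M₄ := (integral_nonneg fun ω => by positivity).trans (h₄ 0)
    have hS₂ : 0 ≤ ∫ ω, (∑ t ∈ range T, ξ t ω) ^ 2 ∂μ := integral_nonneg fun ω => sq_nonneg _
    have hξ₂ : 0 ≤ ∫ ω, ξ T ω ^ 2 ∂μ := integral_nonneg fun ω => sq_nonneg _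
    have hprod := mul_le_mul ih₂ (h₂ T) hξ₂ (hS₂.trans ih₂)
    push_cast
    constructor
    · linarith [h₂ T]
    · nlinarith [h₄ T, mul_nonneg (Nat.cast_nonneg T : (0:ℝ) ≤ T) hM₄]

theorem ae_tendsto_avg_zero_of_moment_bounds (hξ : ∀ t, MemLp (ξ t) 4 μ) (hξ0 : ∀ t, μ[ξ t] = 0)
    (h₂ : ∀ t, ∫ ω, ξ t ω ^ 2 ∂μ ≤ M₂) (h₄ : ∀ t, ∫ ω, ξ t ω ^ 4 ∂μ ≤ M₄)
    (hind : ∀ T, IndepFun (fun ω => ∑ t ∈ range T, ξ t ω) (ξ T) μ) :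
    ∀ᵐ ω ∂μ, Tendsto (fun T : ℕ => (T : ℝ)⁻¹ * ∑ t ∈ range T, ξ t ω) atTop (𝓝 0) := by
  set A : ℕ → Ω → ℝ := fun T ω => ((T : ℝ)⁻¹ * ∑ t ∈ range T, ξ t ω) ^ 4
  have hA : ∀ T, A T = fun ω => ((T : ℝ) ^ 4)⁻¹ * (∑ t ∈ range T, ξ t ω) ^ 4 := fun T => by
    ext ω; simp only [A]; ring
  have hint : ∀ T, Integrable (A T) μ := fun T => by
    rw [hA]
    simpa using ((memLp_finsetSum _ fun t _ => hξ t).integrable_pow_of_le le_rfl).const_mul _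
  have hbound : ∀ T : ℕ, ∫ ω, A T ω ∂μ ≤ (M₄ + 3 * M₂ ^ 2) * ((T : ℝ) ^ 2)⁻¹ := fun T => by
    rw [hA, integral_const_mul]
    rcases Nat.eq_zero_or_pos T with rfl | hT
    · simp
    · calc ((T : ℝ) ^ 4)⁻¹ * ∫ ω, (∑ t ∈ range T, ξ t ω) ^ 4 ∂μ
          ≤ ((T : ℝ) ^ 4)⁻¹ * ((M₄ + 3 * M₂ ^ 2) * T ^ 2) :=
            mul_le_mul_of_nonneg_left (moment_bounds_sum_range hξ hξ0 h₂ h₄ hind T).2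
              (by positivity)
        _ = (M₄ + 3 * M₂ ^ 2) * ((T : ℝ) ^ 2)⁻¹ := by field_simp
  have hsum : Summable fun T => ∫ ω, A T ω ∂μ :=
    Summable.of_nonneg_of_le (fun T => integral_nonneg fun ω => by positivity) hbound
      ((Real.summable_nat_pow_inv.mpr one_lt_two).mul_left _)
  filter_upwards [ae_tendsto_zero_of_summable_integral hint (fun T ω => by positivity) hsum]
    with ω hω
  exact tendsto_zero_of_tendsto_pow_zero four_ne_zero hω

end FourthMoment

lemma sum_range_eq_sum_even_add_sum_odd {M : Type*} [AddCommMonoid M] (w : ℕ → M) (T : ℕ) :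
    ∑ t ∈ range T, w t
      = ∑ s ∈ range ((T + 1) / 2), w (2 * s) + ∑ s ∈ range (T / 2), w (2 * s + 1) := by
  induction T with
  | zero => simp
  | succ T ih =>
    rw [sum_range_succ, ih]
    rcases Nat.even_or_odd' T with ⟨c, rfl | rfl⟩
    · rw [show (2 * c + 1 + 1) / 2 = c + 1 by omega, show (2 * c + 1) / 2 = c by omega,
        show 2 * c / 2 = c by omega, sum_range_succ]
      abel
    · rw [show (2 * c + 1 + 1 + 1) / 2 = c + 1 by omega, show (2 * c + 1 + 1) / 2 = c + 1 by omega,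
        show (2 * c + 1) / 2 = c by omega, sum_range_succ (fun s => w (2 * s + 1)) c]
      abel

lemma tendsto_inv_mul_nhds_zero_iff_isLittleO {a : ℕ → ℝ} :
    Tendsto (fun T : ℕ => (T : ℝ)⁻¹ * a T) atTop (𝓝 0) ↔ a =o[atTop] (fun T : ℕ => (T : ℝ)) := by
  rw [Asymptotics.isLittleO_iff_tendsto' ?_]
  · simp_rw [div_eq_inv_mul]
  · filter_upwards [eventually_ge_atTop 1] with T hT h0
    exact absurd h0 (by positivity)

lemma tendsto_avg_zero_of_even_odd {w : ℕ → ℝ}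
    (he : Tendsto (fun K : ℕ => (K : ℝ)⁻¹ * ∑ s ∈ range K, w (2 * s)) atTop (𝓝 0))
    (ho : Tendsto (fun K : ℕ => (K : ℝ)⁻¹ * ∑ s ∈ range K, w (2 * s + 1)) atTop (𝓝 0)) :
    Tendsto (fun T : ℕ => (T : ℝ)⁻¹ * ∑ t ∈ range T, w t) atTop (𝓝 0) := by
  rw [tendsto_inv_mul_nhds_zero_iff_isLittleO] at he ho ⊢
  have hhalf : ∀ c : ℕ, Tendsto (fun T : ℕ => (T + c) / 2) atTop atTop := fun c =>
    tendsto_atTop_atTop.mpr fun b => ⟨2 * b, fun T hT => by omega⟩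
  have hbig : ∀ c : ℕ, (fun T : ℕ => (((T + c) / 2 : ℕ) : ℝ)) =O[atTop] (fun T : ℕ => (T : ℝ)) :=
    fun c => Asymptotics.IsBigO.of_bound 1 <| by
      filter_upwards [eventually_ge_atTop c] with T hT
      simp only [Real.norm_natCast, one_mul, Nat.cast_le]
      omega
  have := ((he.comp_tendsto (hhalf 1)).trans_isBigO (hbig 1)).add
    ((ho.comp_tendsto (hhalf 0)).trans_isBigO (hbig 0))
  simpa [Function.comp_def, ← sum_range_eq_sum_even_add_sum_odd] using this

section Noise

variable {Ω ι : Type*}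

lemma ProbabilityTheory.iIndepFun.indepFun_of_measurable_iSup [MeasurableSpace Ω] {μ : Measure Ω}
    {κ β γ : Type*} [MeasurableSpace β] [MeasurableSpace γ] {f : κ → Ω → β}
    (hf : iIndepFun f μ) (hfm : ∀ i, Measurable (f i)) {S T : Set κ} (hST : Disjoint S T)
    {X Y : Ω → γ} (hX : Measurable[⨆ i ∈ S, MeasurableSpace.comap (f i) ‹_›] X)
    (hY : Measurable[⨆ i ∈ T, MeasurableSpace.comap (f i) ‹_›] Y) : IndepFun X Y μ :=
  (IndepFun_iff_Indep X Y μ).mpr <| indep_of_indep_of_le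
    (indep_iSup_of_disjoint (fun i => (hfm i).comap_le) ((iIndepFun_iff_iIndep _ _ _).mp hf) hST)
    hX.comap_le hY.comap_le

abbrev noiseSigma (v : ℕ → Ω → ι → ℝ) (s : Set ℕ) : MeasurableSpace Ω :=
  ⨆ p ∈ {p : ℕ × ι | p.1 ∈ s}, MeasurableSpace.comap (fun ω => v p.1 ω p.2) inferInstance

lemma measurable_noiseSigma (v : ℕ → Ω → ι → ℝ) {s : Set ℕ} {t : ℕ} (ht : t ∈ s) (i : ι) :
    Measurable[noiseSigma v s] fun ω => v t ω i :=
  Measurable.of_comap_le <| le_iSup₂_of_le (t, i) ht le_rfl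

variable [MeasurableSpace Ω] {μ : Measure Ω}

lemma indepFun_of_measurable_noiseSigma {v : ℕ → Ω → ι → ℝ}
    (hmeas : ∀ t i, Measurable fun ω => v t ω i)
    (hindep : iIndepFun (fun (p : ℕ × ι) ω => v p.1 ω p.2) μ)
    {s s' : Set ℕ} (hs : Disjoint s s') {X Y : Ω → ℝ}
    (hX : Measurable[noiseSigma v s] X) (hY : Measurable[noiseSigma v s'] Y) : IndepFun X Y μ :=
  hindep.indepFun_of_measurable_iSup (fun p => hmeas p.1 p.2)
    (Set.disjoint_left.mpr fun _ hp hp' => Set.disjoint_left.mp hs hp hp') hX hY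

lemma integral_pow_eq_of_map_eq {X : Ω → ℝ} {P : Measure ℝ} (hX : Measurable X)
    (hlaw : μ.map X = P) (k : ℕ) : ∫ ω, X ω ^ k ∂μ = ∫ x, x ^ k ∂P := by
  rw [← hlaw, integral_map hX.aemeasurable (by fun_prop)]

lemma memLp_of_map_eq {X : Ω → ℝ} {P : Measure ℝ} (hX : Measurable X) (hlaw : μ.map X = P)
    {p : ENNReal} (hP : MemLp id p P) : MemLp X p μ := by
  rw [← hlaw] at hP
  exact (memLp_map_measure_iff aestronglyMeasurable_id hX.aemeasurable).mp hP

lemma Even.pow_le_pow_of_abs_le {k : ℕ} (hk : Even k) {a C : ℝ} (h : |a| ≤ C) :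
    a ^ k ≤ C ^ k := by
  simpa [hk.pow_abs] using pow_le_pow_left₀ (abs_nonneg a) h k

lemma ProbabilityTheory.IndepFun.memLp_mul {X Y : Ω → ℝ} (hXY : IndepFun X Y μ) {p : ℕ} (hp : p ≠ 0)
    (hX : MemLp X p μ) (hY : MemLp Y p μ) : MemLp (fun ω => X ω * Y ω) p μ := by
  refine (integrable_norm_rpow_iff (hX.1.mul hY.1) (by simpa using hp) (by simp)).mp ?_
  simp only [ENNReal.toReal_natCast, Real.rpow_natCast, Pi.mul_apply, norm_mul, mul_pow]
  exact (hXY.comp (measurable_norm.pow_const p) (measurable_norm.pow_const p)).integrable_mul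
    (hX.integrable_norm_pow hp) (hY.integrable_norm_pow hp)

variable [IsProbabilityMeasure μ] {v : ℕ → Ω → ι → ℝ} {P : Measure ℝ}

theorem ae_tendsto_avg_weighted_noise (hmeas : ∀ t i, Measurable fun ω => v t ω i)
    (hindep : iIndepFun (fun (p : ℕ × ι) ω => v p.1 ω p.2) μ)
    (hlaw : ∀ t i, μ.map (fun ω => v t ω i) = P) (hP : MemLp id 4 P) (hP0 : ∫ x, x ∂P = 0)
    {a : ℕ → ℝ} {C : ℝ} (ha : ∀ t, |a t| ≤ C) (d : ℕ) (j : ι) :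
    ∀ᵐ ω ∂μ, Tendsto (fun T : ℕ => (T : ℝ)⁻¹ * ∑ t ∈ range T, a t * v (t + d) ω j)
      atTop (𝓝 0) := by
  have hmom := fun t => integral_pow_eq_of_map_eq (hmeas (t + d) j) (hlaw _ _)
  have hbound : ∀ t k, Even k → ∫ ω, (a t * v (t + d) ω j) ^ k ∂μ ≤ C ^ k * ∫ x, x ^ k ∂P :=
    fun t k hk => by
      simp_rw [mul_pow]
      rw [integral_const_mul, hmom]
      exact mul_le_mul_of_nonneg_right (hk.pow_le_pow_of_abs_le (ha t))
        (integral_nonneg fun x => hk.pow_nonneg x)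
  refine ae_tendsto_avg_zero_of_moment_bounds (ξ := fun t ω => a t * v (t + d) ω j)
    (M₂ := C ^ 2 * ∫ x, x ^ 2 ∂P) (M₄ := C ^ 4 * ∫ x, x ^ 4 ∂P)
    (fun t => (memLp_of_map_eq (hmeas (t + d) j) (hlaw _ _) hP).const_mul (a t))
    (fun t => ?_) (fun t => hbound t 2 even_two) (fun t => hbound t 4 (by decide)) (fun T => ?_)
  · have hmean : ∫ ω, v (t + d) ω j ∂μ = 0 := by simpa [hP0] using hmom t 1
    rw [integral_const_mul, hmean, mul_zero]
  · refine indepFun_of_measurable_noiseSigma hmeas hindep (Set.Iio_disjoint_Ici le_rfl)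
      (Finset.measurable_sum _ fun t ht => (measurable_noiseSigma v ?_ j).const_mul (a t))
      ((measurable_noiseSigma v le_rfl j).const_mul (a T))
    simpa using ht

theorem ae_tendsto_avg_lag_product_parity (hmeas : ∀ t i, Measurable fun ω => v t ω i)
    (hindep : iIndepFun (fun (p : ℕ × ι) ω => v p.1 ω p.2) μ)
    (hlaw : ∀ t i, μ.map (fun ω => v t ω i) = P) (hP : MemLp id 4 P) (hP0 : ∫ x, x ∂P = 0)
    (r : ℕ) (i k : ι) :
    ∀ᵐ ω ∂μ, Tendsto (fun K : ℕ =>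
      (K : ℝ)⁻¹ * ∑ s ∈ range K, v (2 * s + r + 1) ω i * v (2 * s + r) ω k) atTop (𝓝 0) := by
  have hpair : ∀ s, IndepFun (fun ω => v (2 * s + r + 1) ω i) (fun ω => v (2 * s + r) ω k) μ :=
    fun s => hindep.indepFun (i := (2 * s + r + 1, i)) (j := (2 * s + r, k)) (by simp)
  have hmom : ∀ s n, ∫ ω, (v (2 * s + r + 1) ω i * v (2 * s + r) ω k) ^ n ∂μ
      = (∫ x, x ^ n ∂P) * ∫ x, x ^ n ∂P := fun s n => by
    simp_rw [mul_pow]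
    rw [(hpair s).integral_fun_comp_mul_comp (f := fun x => x ^ n) (g := fun x => x ^ n)
      (hmeas _ _).aemeasurable (hmeas _ _).aemeasurable (by fun_prop) (by fun_prop),
      integral_pow_eq_of_map_eq (hmeas _ _) (hlaw _ _),
      integral_pow_eq_of_map_eq (hmeas _ _) (hlaw _ _)]
  refine ae_tendsto_avg_zero_of_moment_bounds
    (ξ := fun s ω => v (2 * s + r + 1) ω i * v (2 * s + r) ω k)
    (M₂ := (∫ x, x ^ 2 ∂P) * ∫ x, x ^ 2 ∂P) (M₄ := (∫ x, x ^ 4 ∂P) * ∫ x, x ^ 4 ∂P)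
    (fun s => (hpair s).memLp_mul four_ne_zero (memLp_of_map_eq (hmeas _ _) (hlaw _ _) hP)
      (memLp_of_map_eq (hmeas _ _) (hlaw _ _) hP))
    (fun s => by simpa [hP0] using hmom s 1) (fun s => (hmom s 2).le) (fun s => (hmom s 4).le)
    (fun K => ?_)
  refine indepFun_of_measurable_noiseSigma hmeas hindep
    (Set.Iio_disjoint_Ici (le_refl (2 * K + r)))
    (Finset.measurable_sum _ fun s hs => (measurable_noiseSigma v ?_ i).mul
      (measurable_noiseSigma v ?_ k))
    ((measurable_noiseSigma v ?_ i).mul (measurable_noiseSigma v ?_ k))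
  all_goals simp only [Set.mem_Iio, Set.mem_Ici, mem_range] at *; omega

theorem ae_tendsto_avg_lag_product (hmeas : ∀ t i, Measurable fun ω => v t ω i)
    (hindep : iIndepFun (fun (p : ℕ × ι) ω => v p.1 ω p.2) μ)
    (hlaw : ∀ t i, μ.map (fun ω => v t ω i) = P) (hP : MemLp id 4 P) (hP0 : ∫ x, x ∂P = 0)
    (i k : ι) :
    ∀ᵐ ω ∂μ, Tendsto (fun T : ℕ => (T : ℝ)⁻¹ * ∑ t ∈ range T, v (t + 1) ω i * v t ω k)
      atTop (𝓝 0) := by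
  filter_upwards [ae_tendsto_avg_lag_product_parity hmeas hindep hlaw hP hP0 0 i k,
    ae_tendsto_avg_lag_product_parity hmeas hindep hlaw hP hP0 1 i k] with ω h₀ h₁
  exact tendsto_avg_zero_of_even_odd (w := fun t => v (t + 1) ω i * v t ω k) h₀ h₁

end Noise

section DataMatrices

variable {m n : ℕ} (u : ℕ → Fin m → ℝ) (x₀ x₁ e₀ e₁ : ℕ → Fin n → ℝ) (T : ℕ)

lemma colMat_mul_transpose_apply {d e : ℕ} (f : ℕ → Fin d → ℝ) (g : ℕ → Fin e → ℝ)
    (i : Fin d) (j : Fin e) :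
    (colMat f T * (colMat g T)ᵀ) i j = ∑ t ∈ range T, f t i * g t j := by
  simp [colMat, mul_apply, Fin.sum_univ_eq_sum_range (fun t => f t i * g t j)]

lemma dataMatrix_sub_apply_inl (l : Fin n) (k : Fin m) :
    (colMat (fun t => x₁ t + e₁ t) T
        * (fromRows (colMat u T) (colMat (fun t => x₀ t + e₀ t) T))ᵀ
      - colMat x₁ T * (fromRows (colMat u T) (colMat x₀ T))ᵀ) l (Sum.inl k)
      = ∑ t ∈ range T, u t k * e₁ t l := by
  simp only [transpose_fromRows, mul_fromCols, Matrix.sub_apply, fromCols_apply_inl,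
    colMat_mul_transpose_apply, ← sum_sub_distrib]
  exact sum_congr rfl fun t _ => by simp only [Pi.add_apply]; ring

lemma dataMatrix_sub_apply_inr (l k : Fin n) :
    (colMat (fun t => x₁ t + e₁ t) T
        * (fromRows (colMat u T) (colMat (fun t => x₀ t + e₀ t) T))ᵀ
      - colMat x₁ T * (fromRows (colMat u T) (colMat x₀ T))ᵀ) l (Sum.inr k)
      = ∑ t ∈ range T, x₀ t k * e₁ t l
        + (∑ t ∈ range T, x₁ t l * e₀ t k + ∑ t ∈ range T, e₁ t l * e₀ t k) := by
  simp only [transpose_fromRows, mul_fromCols, Matrix.sub_apply, fromCols_apply_inr,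
    colMat_mul_transpose_apply, ← sum_sub_distrib, ← sum_add_distrib]
  exact sum_congr rfl fun t _ => by simp only [Pi.add_apply]; ring

end DataMatrices

theorem stmt_13_general {Ω : Type*} [MeasurableSpace Ω] (μ : Measure Ω) [IsProbabilityMeasure μ]
    (n m : ℕ) (σ : ℝ)
    (u : ℕ → Fin m → ℝ) (xo : ℕ → Fin n → ℝ) (v : ℕ → Ω → Fin n → ℝ)
    (hmeas : ∀ t i, Measurable fun ω => v t ω i)
    (hindep : iIndepFun
      (fun (p : ℕ × Fin n) ω => v p.1 ω p.2) μ)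
    (hdist : ∀ t i, Measure.map (fun ω => v t ω i) μ
      = gaussianReal 0 ⟨σ ^ 2, sq_nonneg σ⟩)
    (Cu Cx : ℝ) (hu : ∀ t, ‖u t‖ ≤ Cu) (hx : ∀ t, ‖xo t‖ ≤ Cx)
    -- the noisy shifted data matrix `X̄₁(T) = (1/T)·X₁(T)·Φ(T)ᵀ`
    (X₁bar : ℕ → Ω → Matrix (Fin n) (Fin m ⊕ Fin n) ℝ)
    (hX₁bar : ∀ T ω, X₁bar T ω =
      (T : ℝ)⁻¹ • (colMat (fun t => xo (t + 1) + v (t + 1) ω) T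
        * (fromRows (colMat u T) (colMat (fun t => xo t + v t ω) T))ᵀ))
    -- the noise-free shifted data matrix `X̄₁ᵒ(T) = (1/T)·X₁ᵒ(T)·Φᵒ(T)ᵀ`
    (X₁obar : ℕ → Matrix (Fin n) (Fin m ⊕ Fin n) ℝ)
    (hX₁obar : ∀ T, X₁obar T
      = (T : ℝ)⁻¹ • (colMat (fun t => xo (t + 1)) T
          * (fromRows (colMat u T) (colMat xo T))ᵀ)) :
    ∀ᵐ ω ∂μ, Tendsto (fun T : ℕ => X₁bar T ω - X₁obar T) atTop
      (nhds (0 : Matrix (Fin n) (Fin m ⊕ Fin n) ℝ)) := by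
  have hP := memLp_id_gaussianReal' (μ := 0) (v := ⟨σ ^ 2, sq_nonneg σ⟩) 4 (by simp)
  have hP0 := integral_id_gaussianReal (μ := 0) (v := ⟨σ ^ 2, sq_nonneg σ⟩)
  have hCu : ∀ t k, |u t k| ≤ Cu := fun t k => (norm_le_pi_norm (u t) k).trans (hu t)
  have hCx : ∀ t k, |xo t k| ≤ Cx := fun t k => (norm_le_pi_norm (xo t) k).trans (hx t)
  have weighted {a : ℕ → ℝ} {C : ℝ} (ha : ∀ t, |a t| ≤ C) (d : ℕ) (j : Fin n) :=
    ae_tendsto_avg_weighted_noise hmeas hindep hdist hP hP0 ha d j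
  filter_upwards [ae_all_iff.2 fun l => ae_all_iff.2 fun k => weighted (hCu · k) 1 l,
    ae_all_iff.2 fun l => ae_all_iff.2 fun k => weighted (hCx · k) 1 l,
    ae_all_iff.2 fun l => ae_all_iff.2 fun k => weighted (fun t => hCx (t + 1) l) 0 k,
    ae_all_iff.2 fun l => ae_all_iff.2 fun k =>
      ae_tendsto_avg_lag_product hmeas hindep hdist hP hP0 l k] with ω hU hX₀ hX₁ hV
  refine tendsto_pi_nhds.2 fun l => tendsto_pi_nhds.2 ?_
  rintro (k | k)
  · refine (hU l k).congr fun T => ?_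
    rw [hX₁bar, hX₁obar, ← smul_sub, Matrix.smul_apply, dataMatrix_sub_apply_inl, smul_eq_mul]
  · have h := (hX₀ l k).add ((hX₁ l k).add (hV l k))
    simp only [add_zero, ← mul_add] at h
    refine h.congr fun T => ?_
    rw [hX₁bar, hX₁obar, ← smul_sub, Matrix.smul_apply, dataMatrix_sub_apply_inr, smul_eq_mul]

/-- Proposition 3, condition (C2): almost-sure consistency of the shifted data matrix. -/
theorem stmt_13 {Ω : Type*} [MeasurableSpace Ω] (μ : Measure Ω) [IsProbabilityMeasure μ]
    (n m : ℕ) (σ : ℝ) (hσ : 0 < σ)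
    (u : ℕ → Fin m → ℝ) (xo : ℕ → Fin n → ℝ) (v : ℕ → Ω → Fin n → ℝ)
    (hmeas : ∀ t i, Measurable fun ω => v t ω i)
    (hindep : iIndepFun
      (fun (p : ℕ × Fin n) ω => v p.1 ω p.2) μ)
    (hdist : ∀ t i, Measure.map (fun ω => v t ω i) μ
      = gaussianReal 0 ⟨σ ^ 2, sq_nonneg σ⟩)
    (Cu Cx : ℝ) (hu : ∀ t, ‖u t‖ ≤ Cu) (hx : ∀ t, ‖xo t‖ ≤ Cx)
    -- the noisy shifted data matrix `X̄₁(T) = (1/T)·X₁(T)·Φ(T)ᵀ`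
    (X₁bar : ℕ → Ω → Matrix (Fin n) (Fin m ⊕ Fin n) ℝ)
    (hX₁bar : ∀ T ω, X₁bar T ω =
      (T : ℝ)⁻¹ • (colMat (fun t => xo (t + 1) + v (t + 1) ω) T
        * (fromRows (colMat u T) (colMat (fun t => xo t + v t ω) T))ᵀ))
    -- the noise-free shifted data matrix `X̄₁ᵒ(T) = (1/T)·X₁ᵒ(T)·Φᵒ(T)ᵀ`
    (X₁obar : ℕ → Matrix (Fin n) (Fin m ⊕ Fin n) ℝ)
    (hX₁obar : ∀ T, X₁obar T
      = (T : ℝ)⁻¹ • (colMat (fun t => xo (t + 1)) T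
          * (fromRows (colMat u T) (colMat xo T))ᵀ)) :
    ∀ᵐ ω ∂μ, Tendsto (fun T : ℕ => X₁bar T ω - X₁obar T) atTop
      (nhds (0 : Matrix (Fin n) (Fin m ⊕ Fin n) ℝ)) :=
  stmt_13_general μ n m σ u xo v hmeas hindep hdist Cu Cx hu hx X₁bar hX₁bar X₁obar hX₁obar
end
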